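/- arXiv:2101.07428 — 5 statements merged into one kernel-verified Lean document; each statement's English description precedes it below -/
import Mathlib

section
/- There is a universal constant c > 0 such that every finite metric space (X,d) with doubling dimension d ≥ 1 admits, for every ε ∈ (0,1/6), an (ε^{−c·d}, 1+ε, 1/ε, ε^{−c·d})-ultrametric cover. -/
open scoped BigOperators

/-- `du` is an ultrametric distance function on `X`: a metric satisfying the
strong triangle inequality. -/
def UltrametricOn {X : Type*} (du : X → X → ℝ) : Prop :=
  (∀ x, du x x = 0) ∧ (∀ x y : X, x ≠ y → 0 < du x y) ∧
    (∀ x y : X, du x y = du y x) ∧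
    ∀ x y z : X, du x z ≤ max (du x y) (du y z)

/-- The ultrametric `du` is a `k`-HST: distinct positive distance values are
separated by a factor of `k`. -/
def IsHST {X : Type*} (du : X → X → ℝ) (k : ℝ) : Prop :=
  ∀ x y z : X, 0 < du x y → du x y < du x z → k * du x y ≤ du x z

/-- The tree of the ultrametric `du` has degree at most `δ`: for every `x` and
`r > 0`, the closed ball `{y : du x y ≤ r}` meets at most `δ` equivalence
classes of the relation `du (·,·) < r`. -/
def HSTDegreeLE {X : Type*} (du : X → X → ℝ) (δ : ℝ) : Prop :=
  ∀ (x : X) (r : ℝ), 0 < r → ∃ S : Finset X, (S.card : ℝ) ≤ δ ∧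
    ∀ y : X, du x y ≤ r → ∃ z ∈ S, du y z < r

/-- `(τ, ρ, k, δ)`-ultrametric cover: a `(τ,ρ)`-ultrametric cover in which every
ultrametric is a `k`-HST whose tree has degree at most `δ`. -/
def IsHSTUltrametricCover (X : Type*) [MetricSpace X] (τ ρ k δ : ℝ) : Prop :=
  ∃ s : ℕ, (s : ℝ) ≤ τ ∧ ∃ D : Fin s → X → X → ℝ,
    (∀ i, UltrametricOn (D i)) ∧
    (∀ (i : Fin s) (x y : X), dist x y ≤ D i x y) ∧
    (∀ x y : X, ∃ i, D i x y ≤ ρ * dist x y) ∧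
    (∀ i, IsHST (D i) k) ∧
    ∀ i, HSTDegreeLE (D i) δ

/-- `X` has doubling dimension at most `d`: every ball of radius `2r` can be
covered by at most `2^d` balls of radius `r`. -/
def DoublingDimLE (X : Type*) [MetricSpace X] (d : ℝ) : Prop :=
  ∀ (x : X) (r : ℝ), 0 < r → ∃ S : Finset X, (S.card : ℝ) ≤ (2 : ℝ) ^ d ∧
    ∀ y : X, dist x y ≤ 2 * r → ∃ z ∈ S, dist y z ≤ r

open Finset

namespace HSTCover

variable {X : Type} [MetricSpace X] [Fintype X]

/-- Iterated doubling: a ball of radius `2^m * r` is covered by `(2^d)^m` balls of radius `r`. -/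
lemma pack {d : ℝ} (hdob : DoublingDimLE X d) :
    ∀ (m : ℕ) (x : X) (r : ℝ), 0 < r → ∃ S : Finset X, (S.card : ℝ) ≤ ((2:ℝ)^d)^m ∧
      ∀ y : X, dist x y ≤ 2^m * r → ∃ z ∈ S, dist y z ≤ r := by
  intro m
  induction m with
  | zero =>
    intro x r hr
    refine ⟨{x}, by simp, fun y hy => ⟨x, mem_singleton_self x, ?_⟩⟩
    rw [dist_comm]; simpa using hy
  | succ m ih =>
    intro x r hr
    classical
    obtain ⟨S1, hc1, hS1⟩ := ih x (2*r) (by positivity)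
    choose T hcT hT using fun z => hdob z r hr
    refine ⟨S1.biUnion T, ?_, ?_⟩
    · calc ((S1.biUnion T).card : ℝ) ≤ ((∑ z ∈ S1, (T z).card : ℕ) : ℝ) := by
            exact_mod_cast Nat.cast_le.mpr (Finset.card_biUnion_le)
      _ = ∑ z ∈ S1, ((T z).card : ℝ) := by push_cast; ring
      _ ≤ ∑ _z ∈ S1, (2:ℝ)^d := Finset.sum_le_sum (fun z _ => hcT z)
      _ = (S1.card : ℝ) * (2:ℝ)^d := by rw [Finset.sum_const, nsmul_eq_mul]
      _ ≤ ((2:ℝ)^d)^m * (2:ℝ)^d := by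
            have h2 : (0:ℝ) ≤ (2:ℝ)^d := le_of_lt (Real.rpow_pos_of_pos (by norm_num) d)
            exact mul_le_mul_of_nonneg_right hc1 h2
      _ = ((2:ℝ)^d)^(m+1) := by ring
    · intro y hy
      have : dist x y ≤ 2^m * (2*r) := by
        rw [show (2:ℝ)^m * (2*r) = 2^(m+1) * r by ring]; exact hy
      obtain ⟨z, hz, hyz⟩ := hS1 y this
      obtain ⟨w, hw, hyw⟩ := hT z y (by rwa [dist_comm])
      exact ⟨w, Finset.mem_biUnion.mpr ⟨z, hz, hw⟩, hyw⟩

/-- Count of an `s`-separated set inside a ball of radius `R ≤ 2^m * (s/3)`. -/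
lemma sepCount {d : ℝ} (hdob : DoublingDimLE X d)
    {F : Finset X} {s R : ℝ} {x : X} {m : ℕ}
    (hs : 0 < s) (hsep : ∀ v ∈ F, ∀ w ∈ F, v ≠ w → s < dist v w)
    (hR : ∀ v ∈ F, dist x v ≤ R) (hm : R ≤ 2^m * (s/3)) :
    (F.card : ℝ) ≤ ((2:ℝ)^d)^m := by
  classical
  obtain ⟨S, hcS, hS⟩ := pack hdob m x (s/3) (by positivity)
  have hmem : ∀ v ∈ F, ∃ z ∈ S, dist v z ≤ s/3 := fun v hv => hS v (le_trans (hR v hv) hm)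
  choose g hgS hgd using hmem
  have hcard : F.card ≤ S.card := by
    cases isEmpty_or_nonempty X with
    | inl h => simp [Finset.eq_empty_of_isEmpty F]
    | inr h =>
      obtain ⟨x0⟩ := h
      apply Finset.card_le_card_of_injOn (fun v => if h : v ∈ F then g v h else x0)
      · intro v hv; have hv' : v ∈ F := by simpa using hv
        simp only [dif_pos hv']; exact hgS v hv'
      · intro v hv w hw hvw
        simp only [Finset.mem_coe] at hv hw
        simp only [dif_pos hv, dif_pos hw] at hvw
        by_contra hne
        have hsepvw := hsep v hv w hw hne
        have h1 := hgd v hv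
        have h2 := hgd w hw
        have : dist v w ≤ 2 * (s/3) := by
          calc dist v w ≤ dist v (g v hv) + dist (g v hv) w := dist_triangle _ _ _
          _ = dist v (g v hv) + dist (g w hw) w := by rw [hvw]
          _ = dist v (g v hv) + dist w (g w hw) := by rw [dist_comm (g w hw) w]
          _ ≤ s/3 + s/3 := add_le_add h1 h2
          _ = 2 * (s/3) := by ring
        linarith
  calc (F.card : ℝ) ≤ (S.card : ℝ) := by exact_mod_cast hcard
    _ ≤ ((2:ℝ)^d)^m := hcS

/-- Existence of a maximal `s`-separated set (an `s`-net). -/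
lemma exists_net [Nonempty X] {s : ℝ} (hs : 0 < s) :
    ∃ N : Finset X, (∀ v ∈ N, ∀ w ∈ N, v ≠ w → s < dist v w) ∧
      (∀ x : X, ∃ v ∈ N, dist x v ≤ s) := by
  classical
  have hne : (Finset.univ.powerset.filter
      (fun S : Finset X => ∀ v ∈ S, ∀ w ∈ S, v ≠ w → s < dist v w)).Nonempty := by
    refine ⟨∅, ?_⟩
    simp
  obtain ⟨N, hN, hmax⟩ := Finset.exists_max_image _ (fun S : Finset X => S.card) hne
  simp only [Finset.mem_filter, Finset.mem_powerset] at hN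
  refine ⟨N, hN.2, ?_⟩
  intro x
  by_contra hx
  push_neg at hx
  have hxN : x ∉ N := by
    intro h
    have := hx x h
    simp only [dist_self] at this
    linarith
  have hsep' : ∀ v ∈ insert x N, ∀ w ∈ insert x N, v ≠ w → s < dist v w := by
    intro v hv w hw hvw
    rcases Finset.mem_insert.mp hv with rfl | hv'
    · rcases Finset.mem_insert.mp hw with rfl | hw'
      · exact absurd rfl hvw
      · exact hx w hw'
    · rcases Finset.mem_insert.mp hw with rfl | hw'
      · rw [dist_comm]
        exact hx v hv'
      · exact hN.2 v hv' w hw' hvw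
  have hcard := hmax (insert x N) (by
    simp only [Finset.mem_filter, Finset.mem_powerset]
    exact ⟨Finset.subset_univ _, hsep'⟩)
  rw [Finset.card_insert_of_notMem hxN] at hcard
  omega

/-- Greedy coloring. -/
lemma exists_coloring (N : Finset X) (thr : ℝ) (B : ℕ)
    (hdeg : ∀ v ∈ N, ((N.filter (fun w => dist v w ≤ thr)).card ≤ B)) (hthr : 0 ≤ thr) :
    ∃ col : X → ℕ, (∀ v ∈ N, col v < B) ∧
      (∀ v ∈ N, ∀ w ∈ N, v ≠ w → dist v w ≤ thr → col v ≠ col w) := by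
  classical
  induction N using Finset.strongInduction with
  | _ N ih =>
    rcases N.eq_empty_or_nonempty with rfl | hne
    · exact ⟨fun _ => 0, by simp, by simp⟩
    · obtain ⟨v, hvN⟩ := hne
      obtain ⟨col', hb', hp'⟩ := ih (N.erase v) (Finset.erase_ssubset hvN)
        (fun w hw => le_trans (Finset.card_le_card
          (Finset.filter_subset_filter _ (Finset.erase_subset _ _))) (hdeg w (Finset.mem_of_mem_erase hw)))
      set used : Finset ℕ := ((N.erase v).filter (fun w => dist v w ≤ thr)).image col' with hused
      have hBpos : 0 < B := by
        have hd := hdeg v hvN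
        have hmem : v ∈ N.filter (fun w => dist v w ≤ thr) := by
          simp [hvN, hthr]
        have : 0 < (N.filter (fun w => dist v w ≤ thr)).card := Finset.card_pos.mpr ⟨v, hmem⟩
        omega
      have husedcard : used.card < B := by
        have h1 : used.card ≤ ((N.erase v).filter (fun w => dist v w ≤ thr)).card :=
          Finset.card_image_le
        have h2 : (insert v ((N.erase v).filter (fun w => dist v w ≤ thr))).card
            ≤ (N.filter (fun w => dist v w ≤ thr)).card := by
          apply Finset.card_le_card
          intro z hz
          rcases Finset.mem_insert.mp hz with rfl | hz'
          · simp [hvN, hthr]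
          · simp only [Finset.mem_filter] at hz' ⊢
            exact ⟨Finset.mem_of_mem_erase hz'.1, hz'.2⟩
        have h3 : v ∉ (N.erase v).filter (fun w => dist v w ≤ thr) := by
          simp
        rw [Finset.card_insert_of_notMem h3] at h2
        have := hdeg v hvN
        omega
      have hex : ∃ c, c < B ∧ c ∉ used := by
        by_contra h
        push_neg at h
        have hsub : Finset.range B ⊆ used := fun c hc => h c (Finset.mem_range.mp hc)
        have := Finset.card_le_card hsub
        rw [Finset.card_range] at this
        omega
      obtain ⟨c, hcB, hcu⟩ := hex
      refine ⟨Function.update col' v c, ?_, ?_⟩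
      · intro w hw
        by_cases hwv : w = v
        · rw [hwv, Function.update_self]; exact hcB
        · rw [Function.update_of_ne hwv]
          exact hb' w (Finset.mem_erase.mpr ⟨hwv, hw⟩)
      · intro w hw z hz hwz hd
        by_cases hwv : w = v
        · subst hwv
          have hzv : z ≠ w := fun h => hwz h.symm
          rw [Function.update_self, Function.update_of_ne hzv]
          intro h
          apply hcu
          rw [hused, h]
          exact Finset.mem_image_of_mem col' (by
            simp only [Finset.mem_filter, Finset.mem_erase]
            exact ⟨⟨hzv, hz⟩, hd⟩)
        · by_cases hzv : z = v
          · subst hzv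
            rw [Function.update_of_ne hwv, Function.update_self]
            intro h
            apply hcu
            rw [hused, ← h]
            exact Finset.mem_image_of_mem col' (by
              simp only [Finset.mem_filter, Finset.mem_erase]
              exact ⟨⟨hwv, hw⟩, by rwa [dist_comm]⟩)
          · rw [Function.update_of_ne hwv, Function.update_of_ne hzv]
            exact hp' w (Finset.mem_erase.mpr ⟨hwv, hw⟩) z (Finset.mem_erase.mpr ⟨hzv, hz⟩) hwz hd


/-! ### The tree construction -/

section Tree

attribute [local instance 10] Classical.propDecidable

variable {X : Type} [MetricSpace X] [Fintype X]
variable (N : ℕ → Finset X) (col : ℕ → X → ℕ) (base Kr : ℝ) (m a b : ℕ)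

/-- scale of level `j` -/
def Lam (j : ℕ) : ℝ := base * Kr ^ j

/-- Bundle of structural hypotheses on the data. -/
structure Good (N : ℕ → Finset X) (col : ℕ → X → ℕ) (base Kr : ℝ) (CV : ℕ) : Prop where
  hbase : 0 < base
  hKr : 72 ≤ Kr
  hsep : ∀ j, ∀ v ∈ N j, ∀ w ∈ N j, v ≠ w → Lam base Kr j / 16 < dist v w
  hcov : ∀ (j : ℕ) (x : X), ∃ v ∈ N j, dist x v ≤ Lam base Kr j / 16
  hN0 : N 0 = Finset.univ
  hcolB : ∀ j, ∀ v ∈ N j, col j v < CV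
  hcolP : ∀ j, ∀ v ∈ N j, ∀ w ∈ N j, v ≠ w →
    dist v w ≤ 2 * Kr * Lam base Kr j → col j v ≠ col j w

variable {CV : ℕ}

lemma Lam_pos (hb : 0 < base) (hK : 72 ≤ Kr) (j : ℕ) : 0 < Lam base Kr j := by
  have : (0:ℝ) < Kr := by linarith
  exact mul_pos hb (pow_pos this j)

lemma Lam_succ (j : ℕ) : Lam base Kr (j+1) = Kr * Lam base Kr j := by
  simp [Lam, pow_succ]; ring

lemma Lam_mono (hb : 0 < base) (hK : 72 ≤ Kr) {j k : ℕ} (h : j ≤ k) :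
    Lam base Kr j ≤ Lam base Kr k := by
  have h1 : (1:ℝ) ≤ Kr := by linarith
  exact mul_le_mul_of_nonneg_left (pow_le_pow_right₀ h1 h) (le_of_lt hb)

lemma Lam_lt (hb : 0 < base) (hK : 72 ≤ Kr) {j k : ℕ} (h : j < k) :
    Lam base Kr j < Lam base Kr k := by
  have h1 : (1:ℝ) < Kr := by linarith
  exact mul_lt_mul_of_pos_left (pow_lt_pow_right₀ h1 h) hb

/-- level-`j` assignment of a point to a net point of `N j`; net points colored `m`
get priority. -/
noncomputable def assign (j : ℕ) (u : X) : X :=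
  if h : ∃ v, v ∈ N j ∧ col j v = m ∧ dist u v ≤ Lam base Kr j / 4 then h.choose
  else if h2 : ∃ v, v ∈ N j ∧ dist u v ≤ Lam base Kr j / 4 then h2.choose
  else u

lemma assign_spec (hg : Good N col base Kr CV) (j : ℕ) (u : X) :
    assign N col base Kr m j u ∈ N j ∧ dist u (assign N col base Kr m j u) ≤ Lam base Kr j / 4 := by
  classical
  unfold assign
  split
  · next h => exact ⟨h.choose_spec.1, h.choose_spec.2.2⟩
  · split
    · next h2 => exact ⟨h2.choose_spec.1, h2.choose_spec.2⟩
    · next h1 h2 =>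
      exfalso
      obtain ⟨v, hv, hd⟩ := hg.hcov j u
      refine h2 ⟨v, hv, le_trans hd ?_⟩
      have := Lam_pos base Kr hg.hbase hg.hKr j
      linarith

/-- the leader of (the cluster of) `x` at level `j` -/
noncomputable def lam : ℕ → X → X
  | 0 => fun x => x
  | (j+1) => fun x => assign N col base Kr m (j+1) (lam j x)

lemma lam_mem (hg : Good N col base Kr CV) (j : ℕ) (x : X) :
    lam N col base Kr m j x ∈ N j := by
  cases j with
  | zero => rw [hg.hN0]; exact Finset.mem_univ _
  | succ j => exact (assign_spec N col base Kr m hg (j+1) (lam N col base Kr m j x)).1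

lemma dist_lam (hg : Good N col base Kr CV) (j : ℕ) (x : X) :
    dist x (lam N col base Kr m j x) ≤ Lam base Kr j / 3 := by
  induction j with
  | zero =>
    simp only [lam, dist_self]
    have := Lam_pos base Kr hg.hbase hg.hKr 0
    linarith
  | succ j ih =>
    have h1 := (assign_spec N col base Kr m hg (j+1) (lam N col base Kr m j x)).2
    have h2 : dist x (lam N col base Kr m (j+1) x) ≤
        dist x (lam N col base Kr m j x) + dist (lam N col base Kr m j x) (lam N col base Kr m (j+1) x) :=
      dist_triangle _ _ _
    have h3 : Lam base Kr (j+1) = Kr * Lam base Kr j := Lam_succ base Kr j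
    have h4 : (0:ℝ) < Lam base Kr j := Lam_pos base Kr hg.hbase hg.hKr j
    have hK : (72:ℝ) ≤ Kr := hg.hKr
    have : dist (lam N col base Kr m j x) (lam N col base Kr m (j+1) x) ≤ Lam base Kr (j+1) / 4 := h1
    -- Lam j / 3 + Lam (j+1)/4 ≤ Lam (j+1)/3  ⟺  Kr ≥ 4
    nlinarith [ih]

/-- two clusters at level `j` qualify to be merged (at level `j+1`) in the tree `(m,a,b)` -/
def qual (j : ℕ) (u w : X) : Prop :=
  u ∈ N j ∧ w ∈ N j ∧ col j u = a ∧ col j w = b ∧ u ≠ w ∧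
    dist u w ≤ Lam base Kr (j+1) * (1 - 2/Kr) ∧
    assign N col base Kr m (j+2) (assign N col base Kr m (j+1) u) =
      assign N col base Kr m (j+2) (assign N col base Kr m (j+1) w)

def mrel (j : ℕ) (u w : X) : Prop :=
  qual N col base Kr m a b j u w ∨ qual N col base Kr m a b j w u

lemma mrel_symm {j : ℕ} {u w : X} (h : mrel N col base Kr m a b j u w) :
    mrel N col base Kr m a b j w u := h.symm

def extd (j : ℕ) (u : X) : Prop := ∃ w, mrel N col base Kr m a b j u w

lemma mrel_unique (hg : Good N col base Kr CV) {j : ℕ} {u w w' : X}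
    (h1 : mrel N col base Kr m a b j u w) (h2 : mrel N col base Kr m a b j u w') : w = w' := by
  have hL1 : (0:ℝ) < Lam base Kr (j+1) := Lam_pos base Kr hg.hbase hg.hKr (j+1)
  have hLj : (0:ℝ) < Lam base Kr j := Lam_pos base Kr hg.hbase hg.hKr j
  have hLsucc : Lam base Kr (j+1) = Kr * Lam base Kr j := Lam_succ base Kr j
  have hK : (72:ℝ) ≤ Kr := hg.hKr
  have hKpos : (0:ℝ) < Kr := by linarith
  have h2Kr : (0:ℝ) ≤ 2/Kr := by positivity
  have hfrac : Lam base Kr (j+1) * (1 - 2/Kr) ≤ Kr * Lam base Kr j := by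
    rw [← hLsucc]
    nlinarith
  have hthr : Kr * Lam base Kr j + Kr * Lam base Kr j = 2 * Kr * Lam base Kr j := by ring
  have key : ∀ {z z' : X}, z ∈ N j → z' ∈ N j → col j z = col j z' →
      dist u z ≤ Lam base Kr (j+1) * (1 - 2/Kr) → dist u z' ≤ Lam base Kr (j+1) * (1 - 2/Kr) →
      z = z' := by
    intro z z' hz hz' hcol hd hd'
    by_contra hne
    apply hg.hcolP j z hz z' hz' hne _ hcol
    calc dist z z' ≤ dist z u + dist u z' := dist_triangle _ _ _
      _ = dist u z + dist u z' := by rw [dist_comm z u]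
      _ ≤ Kr * Lam base Kr j + Kr * Lam base Kr j := add_le_add (le_trans hd hfrac) (le_trans hd' hfrac)
      _ = 2 * Kr * Lam base Kr j := by ring
  have hsingle : ∀ {z z' : X}, qual N col base Kr m a b j z z' →
      dist z z' ≤ 2 * Kr * Lam base Kr j := by
    intro z z' hq
    refine le_trans hq.2.2.2.2.2.1 (le_trans hfrac ?_)
    nlinarith
  rcases h1 with hq1 | hq1 <;> rcases h2 with hq2 | hq2
  · exact key hq1.2.1 hq2.2.1 (hq1.2.2.2.1.trans hq2.2.2.2.1.symm) hq1.2.2.2.2.2.1 hq2.2.2.2.2.2.1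
  · exfalso
    have hab : a = b := hq1.2.2.1.symm.trans hq2.2.2.2.1
    exact hg.hcolP j u hq1.1 w hq1.2.1 hq1.2.2.2.2.1 (hsingle hq1)
      (hq1.2.2.1.trans (hab.trans hq1.2.2.2.1.symm))
  · exfalso
    have hab : a = b := hq2.2.2.1.symm.trans hq1.2.2.2.1
    exact hg.hcolP j u hq2.1 w' hq2.2.1 hq2.2.2.2.2.1 (hsingle hq2)
      (hq2.2.2.1.trans (hab.trans hq2.2.2.2.1.symm))
  · have hd1 : dist u w ≤ Lam base Kr (j+1) * (1 - 2/Kr) := by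
      rw [dist_comm]; exact hq1.2.2.2.2.2.1
    have hd2 : dist u w' ≤ Lam base Kr (j+1) * (1 - 2/Kr) := by
      rw [dist_comm]; exact hq2.2.2.2.2.2.1
    exact key hq1.1 hq2.1 (hq1.2.2.1.trans hq2.2.2.1.symm) hd1 hd2

/-- the equivalence `x ~ y` at level `j` of the tree `(m,a,b)` -/
def together : ℕ → X → X → Prop
  | 0 => fun x y => x = y
  | (j+1) => fun x y =>
      if (j+1) % 2 = 1 then lam N col base Kr m (j+1) x = lam N col base Kr m (j+1) y
      else (lam N col base Kr m j x = lam N col base Kr m j y ∨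
            mrel N col base Kr m a b j (lam N col base Kr m j x) (lam N col base Kr m j y) ∨
            (lam N col base Kr m (j+1) x = lam N col base Kr m (j+1) y ∧
              ¬ extd N col base Kr m a b j (lam N col base Kr m j x) ∧
              ¬ extd N col base Kr m a b j (lam N col base Kr m j y)))

lemma together_zero {x y : X} : together N col base Kr m a b 0 x y ↔ x = y := Iff.rfl

lemma together_succ (j : ℕ) {x y : X} : together N col base Kr m a b (j+1) x y ↔
    (if (j+1) % 2 = 1 then lam N col base Kr m (j+1) x = lam N col base Kr m (j+1) y
      else (lam N col base Kr m j x = lam N col base Kr m j y ∨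
            mrel N col base Kr m a b j (lam N col base Kr m j x) (lam N col base Kr m j y) ∨
            (lam N col base Kr m (j+1) x = lam N col base Kr m (j+1) y ∧
              ¬ extd N col base Kr m a b j (lam N col base Kr m j x) ∧
              ¬ extd N col base Kr m a b j (lam N col base Kr m j y)))) := Iff.rfl

lemma together_refl (j : ℕ) (x : X) : together N col base Kr m a b j x x := by
  cases j with
  | zero => rfl
  | succ j =>
    rw [together_succ]
    by_cases hp : (j+1) % 2 = 1
    · rw [if_pos hp]
    · rw [if_neg hp]; exact Or.inl rfl

lemma together_symm {j : ℕ} {x y : X} (h : together N col base Kr m a b j x y) :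
    together N col base Kr m a b j y x := by
  cases j with
  | zero => exact (together_zero N col base Kr m a b).mpr ((together_zero N col base Kr m a b).mp h).symm
  | succ j =>
    rw [together_succ] at h ⊢
    by_cases hp : (j+1) % 2 = 1
    · rw [if_pos hp] at h ⊢; exact h.symm
    · rw [if_neg hp] at h ⊢
      rcases h with h | h | h
      · exact Or.inl h.symm
      · exact Or.inr (Or.inl h.symm)
      · exact Or.inr (Or.inr ⟨h.1.symm, h.2.2, h.2.1⟩)

lemma together_trans (hg : Good N col base Kr CV) {j : ℕ} {x y z : X}
    (h1 : together N col base Kr m a b j x y) (h2 : together N col base Kr m a b j y z) :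
    together N col base Kr m a b j x z := by
  cases j with
  | zero =>
    exact (together_zero N col base Kr m a b).mpr
      (((together_zero N col base Kr m a b).mp h1).trans ((together_zero N col base Kr m a b).mp h2))
  | succ j =>
    rw [together_succ] at h1 h2 ⊢
    by_cases hp : (j+1) % 2 = 1
    · rw [if_pos hp] at h1 h2 ⊢; exact h1.trans h2
    · rw [if_neg hp] at h1 h2 ⊢
      rcases h1 with h1 | h1 | h1 <;> rcases h2 with h2 | h2 | h2
      · exact Or.inl (h1.trans h2)
      · exact Or.inr (Or.inl (h1 ▸ h2))
      · refine Or.inr (Or.inr ⟨?_, by rw [h1]; exact h2.2.1, h2.2.2⟩)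
        exact (show lam N col base Kr m (j+1) x = lam N col base Kr m (j+1) y from
          congrArg (assign N col base Kr m (j+1)) h1).trans h2.1
      · exact Or.inr (Or.inl (h2 ▸ h1))
      · exact Or.inl (mrel_unique N col base Kr m a b hg (mrel_symm N col base Kr m a b h1) h2)
      · exact absurd ⟨_, mrel_symm N col base Kr m a b h1⟩ h2.2.1
      · refine Or.inr (Or.inr ⟨?_, h1.2.1, by rw [← h2]; exact h1.2.2⟩)
        exact h1.1.trans (show lam N col base Kr m (j+1) y = lam N col base Kr m (j+1) z from
          congrArg (assign N col base Kr m (j+1)) h2)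
      · exact absurd ⟨_, h2⟩ h1.2.2
      · exact Or.inr (Or.inr ⟨h1.1.trans h2.1, h1.2.1, h2.2.2⟩)

lemma together_mono (j : ℕ) {x y : X} (h : together N col base Kr m a b j x y) :
    together N col base Kr m a b (j+1) x y := by
  cases j with
  | zero =>
    have hxy : x = y := h
    subst hxy
    exact together_refl N col base Kr m a b 1 x
  | succ j =>
    rw [together_succ] at h
    rw [together_succ]
    by_cases hp : (j+1) % 2 = 1
    · rw [if_pos hp] at h
      have hp2 : ¬ ((j+1+1) % 2 = 1) := by omega
      rw [if_neg hp2]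
      exact Or.inl h
    · rw [if_neg hp] at h
      have hp2 : (j+1+1) % 2 = 1 := by omega
      rw [if_pos hp2]
      show lam N col base Kr m (j+2) x = lam N col base Kr m (j+2) y
      rcases h with h | h | h
      · exact congrArg (assign N col base Kr m (j+2)) (congrArg (assign N col base Kr m (j+1)) h)
      · rcases h with hq | hq
        · exact hq.2.2.2.2.2.2
        · exact hq.2.2.2.2.2.2.symm
      · exact congrArg (assign N col base Kr m (j+2)) h.1

lemma together_mono_le {j k : ℕ} (h : j ≤ k) {x y : X}
    (ht : together N col base Kr m a b j x y) : together N col base Kr m a b k x y := by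
  induction k with
  | zero => rwa [Nat.le_zero.mp h] at ht
  | succ k ih =>
    rcases Nat.lt_or_ge j (k+1) with hlt | hge
    · exact together_mono N col base Kr m a b k (ih (Nat.lt_succ_iff.mp hlt))
    · rwa [Nat.le_antisymm h hge] at ht

lemma together_dist (hg : Good N col base Kr CV) {j : ℕ} {x y : X}
    (h : together N col base Kr m a b j x y) : dist x y ≤ Lam base Kr j := by
  have hK : (72:ℝ) ≤ Kr := hg.hKr
  cases j with
  | zero =>
    have hxy : x = y := h
    subst hxy
    simp only [dist_self]
    exact le_of_lt (Lam_pos base Kr hg.hbase hg.hKr 0)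
  | succ j =>
    have hLj : (0:ℝ) < Lam base Kr j := Lam_pos base Kr hg.hbase hg.hKr j
    have hLj1 : (0:ℝ) < Lam base Kr (j+1) := Lam_pos base Kr hg.hbase hg.hKr (j+1)
    have hsucc : Lam base Kr (j+1) = Kr * Lam base Kr j := Lam_succ base Kr j
    have hxy : ∀ k : ℕ, lam N col base Kr m k x = lam N col base Kr m k y →
        dist x y ≤ 2 * (Lam base Kr k / 3) := by
      intro k hk
      calc dist x y ≤ dist x (lam N col base Kr m k x) + dist (lam N col base Kr m k x) y :=
            dist_triangle _ _ _
        _ = dist x (lam N col base Kr m k x) + dist y (lam N col base Kr m k y) := by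
            rw [hk, dist_comm (lam N col base Kr m k y) y]
        _ ≤ Lam base Kr k / 3 + Lam base Kr k / 3 :=
            add_le_add (dist_lam N col base Kr m hg k x) (dist_lam N col base Kr m hg k y)
        _ = 2 * (Lam base Kr k / 3) := by ring
    rw [together_succ] at h
    by_cases hp : (j+1) % 2 = 1
    · rw [if_pos hp] at h
      have := hxy (j+1) h
      linarith
    · rw [if_neg hp] at h
      rcases h with h | h | h
      · have := hxy j h
        have hmono : Lam base Kr j ≤ Lam base Kr (j+1) := Lam_mono base Kr hg.hbase hg.hKr (Nat.le_succ j)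
        linarith
      · have hd : dist (lam N col base Kr m j x) (lam N col base Kr m j y) ≤
            Lam base Kr (j+1) * (1 - 2/Kr) := by
          rcases h with hq | hq
          · exact hq.2.2.2.2.2.1
          · rw [dist_comm]; exact hq.2.2.2.2.2.1
        have h1 := dist_lam N col base Kr m hg j x
        have h2 := dist_lam N col base Kr m hg j y
        have hsum : dist x y ≤ Lam base Kr j / 3 + Lam base Kr (j+1) * (1 - 2/Kr) + Lam base Kr j / 3 := by
          calc dist x y ≤ dist x (lam N col base Kr m j x) + dist (lam N col base Kr m j x) y :=
                dist_triangle _ _ _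
            _ ≤ dist x (lam N col base Kr m j x) +
                (dist (lam N col base Kr m j x) (lam N col base Kr m j y) +
                 dist (lam N col base Kr m j y) y) := by
                have := dist_triangle (lam N col base Kr m j x) (lam N col base Kr m j y) y
                linarith
            _ = dist x (lam N col base Kr m j x) +
                (dist (lam N col base Kr m j x) (lam N col base Kr m j y) +
                 dist y (lam N col base Kr m j y)) := by rw [dist_comm (lam N col base Kr m j y) y]
            _ ≤ Lam base Kr j / 3 + (Lam base Kr (j+1) * (1 - 2/Kr) + Lam base Kr j / 3) :=
                add_le_add h1 (add_le_add hd h2)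
            _ = Lam base Kr j / 3 + Lam base Kr (j+1) * (1 - 2/Kr) + Lam base Kr j / 3 := by ring
        have hexp : Lam base Kr (j+1) * (1 - 2/Kr) = Lam base Kr (j+1) - 2 * Lam base Kr j := by
          rw [hsucc]
          have hKne : Kr ≠ 0 := by linarith
          field_simp
        linarith
      · have := hxy (j+1) h.1
        linarith


lemma lam_eq_together {q : ℕ} {x y : X}
    (h : lam N col base Kr m q x = lam N col base Kr m q y) :
    together N col base Kr m a b (q+1) x y := by
  rw [together_succ]
  by_cases hp : (q+1) % 2 = 1
  · rw [if_pos hp]; exact congrArg (assign N col base Kr m (q+1)) h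
  · rw [if_neg hp]; exact Or.inl h

lemma together_big (hg : Good N col base Kr CV) {R : ℝ} (hR : ∀ x y : X, dist x y ≤ R)
    {j : ℕ} (hbig : 16 * R < Lam base Kr j) (x y : X) :
    lam N col base Kr m j x = lam N col base Kr m j y := by
  by_contra hne
  have h1 := hg.hsep j _ (lam_mem N col base Kr m hg j x) _ (lam_mem N col base Kr m hg j y) hne
  have h2 := hR (lam N col base Kr m j x) (lam N col base Kr m j y)
  linarith

lemma together_exists (hg : Good N col base Kr CV) {R : ℝ} (hR : ∀ x y : X, dist x y ≤ R)
    (x y : X) : ∃ j, together N col base Kr m a b j x y := by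
  have hKr1 : (1:ℝ) < Kr := by linarith [hg.hKr]
  obtain ⟨n, hn⟩ := pow_unbounded_of_one_lt ((16*R+1)/base) hKr1
  have hbig : 16 * R < Lam base Kr n := by
    have hb := hg.hbase
    have := (div_lt_iff₀ hb).mp hn
    unfold Lam
    nlinarith
  exact ⟨n+1, lam_eq_together N col base Kr m a b (together_big N col base Kr m hg hR hbig x y)⟩

/-- the ultrametric of the tree `(m,a,b)` -/
noncomputable def du (x y : X) : ℝ :=
  if x = y then 0
  else if h : ∃ j, together N col base Kr m a b j x y then Lam base Kr (Nat.find h) else 0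

lemma du_self (x : X) : du N col base Kr m a b x x = 0 := by
  unfold du
  rw [if_pos rfl]

lemma du_eq_lam {x y : X} (hne : x ≠ y) (h : ∃ j, together N col base Kr m a b j x y) :
    du N col base Kr m a b x y = Lam base Kr (Nat.find h) := by
  unfold du
  rw [if_neg hne, dif_pos h]

lemma du_pos (hg : Good N col base Kr CV) {R : ℝ} (hR : ∀ x y : X, dist x y ≤ R)
    {x y : X} (hne : x ≠ y) : 0 < du N col base Kr m a b x y := by
  rw [du_eq_lam N col base Kr m a b hne (together_exists N col base Kr m a b hg hR x y)]
  exact Lam_pos base Kr hg.hbase hg.hKr _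

lemma du_nonneg (hg : Good N col base Kr CV) {R : ℝ} (hR : ∀ x y : X, dist x y ≤ R)
    (x y : X) : 0 ≤ du N col base Kr m a b x y := by
  by_cases hne : x = y
  · subst hne; rw [du_self]
  · exact le_of_lt (du_pos N col base Kr m a b hg hR hne)

lemma du_le_of_together (hg : Good N col base Kr CV) {j : ℕ} {x y : X}
    (ht : together N col base Kr m a b j x y) : du N col base Kr m a b x y ≤ Lam base Kr j := by
  by_cases hne : x = y
  · subst hne; rw [du_self]; exact le_of_lt (Lam_pos base Kr hg.hbase hg.hKr j)
  · rw [du_eq_lam N col base Kr m a b hne ⟨j, ht⟩]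
    exact Lam_mono base Kr hg.hbase hg.hKr (Nat.find_min' ⟨j, ht⟩ ht)

lemma together_of_du_le (hg : Good N col base Kr CV) {R : ℝ} (hR : ∀ x y : X, dist x y ≤ R)
    {j : ℕ} {x y : X} (hd : du N col base Kr m a b x y ≤ Lam base Kr j) :
    together N col base Kr m a b j x y := by
  by_cases hne : x = y
  · subst hne; exact together_refl N col base Kr m a b j x
  · have hex := together_exists N col base Kr m a b hg hR x y
    rw [du_eq_lam N col base Kr m a b hne hex] at hd
    have hfind : Nat.find hex ≤ j := by
      by_contra hlt
      push_neg at hlt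
      exact absurd hd (not_le.mpr (Lam_lt base Kr hg.hbase hg.hKr hlt))
    exact together_mono_le N col base Kr m a b hfind (Nat.find_spec hex)

lemma du_symm (x y : X) : du N col base Kr m a b x y = du N col base Kr m a b y x := by
  by_cases hne : x = y
  · subst hne; rfl
  · unfold du
    rw [if_neg hne, if_neg (Ne.symm hne)]
    by_cases h : ∃ j, together N col base Kr m a b j x y
    · have h' : ∃ j, together N col base Kr m a b j y x :=
        ⟨h.choose, together_symm N col base Kr m a b h.choose_spec⟩
      rw [dif_pos h, dif_pos h']
      congr 1
      apply le_antisymm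
      · exact Nat.find_min' h (together_symm N col base Kr m a b (Nat.find_spec h'))
      · exact Nat.find_min' h' (together_symm N col base Kr m a b (Nat.find_spec h))
    · have h' : ¬ ∃ j, together N col base Kr m a b j y x := by
        rintro ⟨j, hj⟩
        exact h ⟨j, together_symm N col base Kr m a b hj⟩
      rw [dif_neg h, dif_neg h']

lemma du_dominates (hg : Good N col base Kr CV) {R : ℝ} (hR : ∀ x y : X, dist x y ≤ R)
    (x y : X) : dist x y ≤ du N col base Kr m a b x y := by
  by_cases hne : x = y
  · subst hne; rw [du_self, dist_self]
  · have hex := together_exists N col base Kr m a b hg hR x y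
    rw [du_eq_lam N col base Kr m a b hne hex]
    exact together_dist N col base Kr m a b hg (Nat.find_spec hex)

lemma du_ultra (hg : Good N col base Kr CV) {R : ℝ} (hR : ∀ x y : X, dist x y ≤ R)
    (x y z : X) : du N col base Kr m a b x z ≤
      max (du N col base Kr m a b x y) (du N col base Kr m a b y z) := by
  by_cases hxz : x = z
  · subst hxz
    rw [du_self]
    exact le_max_of_le_left (du_nonneg N col base Kr m a b hg hR x y)
  by_cases hxy : x = y
  · subst hxy
    exact le_max_right _ _
  by_cases hyz : y = z
  · subst hyz
    exact le_max_left _ _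
  have h1 := together_exists N col base Kr m a b hg hR x y
  have h2 := together_exists N col base Kr m a b hg hR y z
  set j1 := Nat.find h1
  set j2 := Nat.find h2
  have ht1 : together N col base Kr m a b (max j1 j2) x y :=
    together_mono_le N col base Kr m a b (le_max_left _ _) (Nat.find_spec h1)
  have ht2 : together N col base Kr m a b (max j1 j2) y z :=
    together_mono_le N col base Kr m a b (le_max_right _ _) (Nat.find_spec h2)
  have ht := together_trans N col base Kr m a b hg ht1 ht2
  have hle := du_le_of_together N col base Kr m a b hg ht
  rw [du_eq_lam N col base Kr m a b hxy h1, du_eq_lam N col base Kr m a b hyz h2]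
  rcases le_total j1 j2 with hj | hj
  · rw [max_eq_right hj] at hle
    exact le_max_of_le_right hle
  · rw [max_eq_left hj] at hle
    exact le_max_of_le_left hle

lemma du_hst (hg : Good N col base Kr CV) {R : ℝ} (hR : ∀ x y : X, dist x y ≤ R)
    (x y z : X) (hpos : 0 < du N col base Kr m a b x y)
    (hlt : du N col base Kr m a b x y < du N col base Kr m a b x z) :
    Kr * du N col base Kr m a b x y ≤ du N col base Kr m a b x z := by
  have hxy : x ≠ y := by
    intro h; subst h; rw [du_self] at hpos; exact lt_irrefl _ hpos
  have hxz : x ≠ z := by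
    intro h; subst h; rw [du_self] at hlt
    exact absurd (hpos.trans hlt) (lt_irrefl _)
  have h1 := together_exists N col base Kr m a b hg hR x y
  have h2 := together_exists N col base Kr m a b hg hR x z
  rw [du_eq_lam N col base Kr m a b hxy h1, du_eq_lam N col base Kr m a b hxz h2] at hlt ⊢
  have hj : Nat.find h1 < Nat.find h2 := by
    by_contra hle
    push_neg at hle
    exact absurd hlt (not_lt.mpr (Lam_mono base Kr hg.hbase hg.hKr hle))
  calc Kr * Lam base Kr (Nat.find h1) = Lam base Kr (Nat.find h1 + 1) := (Lam_succ base Kr _).symm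
    _ ≤ Lam base Kr (Nat.find h2) := Lam_mono base Kr hg.hbase hg.hKr hj



lemma Lam_lt_rev (hb : 0 < base) (hK : 72 ≤ Kr) {j k : ℕ}
    (h : Lam base Kr j < Lam base Kr k) : j < k := by
  by_contra hle
  push_neg at hle
  exact absurd h (not_lt.mpr (Lam_mono base Kr hb hK hle))

/-- The one-step covering trick used in the guarantee: any point within `Lam j / 4`
of the distinguished net point `v` of color `m` is assigned to `v`. -/
lemma assign_eq_of_near (hg : Good N col base Kr CV) {j : ℕ} {v w : X}
    (hvmem : v ∈ N j) (hcolv : col j v = m)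
    (hw : dist w v ≤ Lam base Kr j / 4) : assign N col base Kr m j w = v := by
  have hL : (0:ℝ) < Lam base Kr j := Lam_pos base Kr hg.hbase hg.hKr j
  have hK : (72:ℝ) ≤ Kr := hg.hKr
  have h : ∃ v', v' ∈ N j ∧ col j v' = m ∧ dist w v' ≤ Lam base Kr j / 4 := ⟨v, hvmem, hcolv, hw⟩
  unfold assign
  rw [dif_pos h]
  obtain ⟨h1, h2, h3⟩ := h.choose_spec
  by_contra hne
  apply hg.hcolP j _ h1 v hvmem hne _ (h2.trans hcolv.symm)
  calc dist h.choose v ≤ dist h.choose w + dist w v := dist_triangle _ _ _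
    _ = dist w h.choose + dist w v := by rw [dist_comm h.choose w]
    _ ≤ Lam base Kr j / 4 + Lam base Kr j / 4 := add_le_add h3 hw
    _ ≤ 2 * Kr * Lam base Kr j := by nlinarith

set_option maxHeartbeats 1000000 in
lemma du_guarantee (hg : Good N col base Kr CV) {R : ℝ} (hR : ∀ x y : X, dist x y ≤ R)
    {ε : ℝ} (hε : 0 < ε) (hε6 : ε < 1/6) (hKlb : 12/ε ≤ Kr)
    {x y : X} (hne : x ≠ y) {p : ℕ} (hp : p % 2 = 0)
    (hwin1 : (1 + ε/4) * dist x y ≤ Lam base Kr (p+2))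
    (hwin2 : Lam base Kr (p+2) ≤ (1 + ε) * dist x y)
    {v : X} (hvmem : v ∈ N (p+3)) (hvx : dist x v ≤ Lam base Kr (p+3) / 16)
    (hm : col (p+3) v = m)
    (ha : col (p+1) (lam N col base Kr m (p+1) x) = a)
    (hb : col (p+1) (lam N col base Kr m (p+1) y) = b) :
    du N col base Kr m a b x y ≤ (1+ε) * dist x y := by
  have hK : (72:ℝ) ≤ Kr := hg.hKr
  have hKpos : (0:ℝ) < Kr := by linarith
  have ht : (0:ℝ) < dist x y := dist_pos.mpr hne
  have hL1 : (0:ℝ) < Lam base Kr (p+1) := Lam_pos base Kr hg.hbase hg.hKr (p+1)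
  have hL2 : (0:ℝ) < Lam base Kr (p+2) := Lam_pos base Kr hg.hbase hg.hKr (p+2)
  have hL3 : (0:ℝ) < Lam base Kr (p+3) := Lam_pos base Kr hg.hbase hg.hKr (p+3)
  have hs2 : Lam base Kr (p+2) = Kr * Lam base Kr (p+1) := Lam_succ base Kr (p+1)
  have hs3 : Lam base Kr (p+3) = Kr * Lam base Kr (p+2) := Lam_succ base Kr (p+2)
  have hKe : 12 ≤ Kr * ε := by
    rw [div_le_iff₀ hε] at hKlb
    linarith
  -- it suffices to show we are `together` at level `p+2`
  suffices htog : together N col base Kr m a b (p+2) x y by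
    calc du N col base Kr m a b x y ≤ Lam base Kr (p+2) :=
        du_le_of_together N col base Kr m a b hg htog
      _ ≤ (1+ε) * dist x y := hwin2
  set u := lam N col base Kr m (p+1) x with hu
  set u' := lam N col base Kr m (p+1) y with hu'
  by_cases huu : u = u'
  · exact lam_eq_together N col base Kr m a b
      (show lam N col base Kr m (p+1) x = lam N col base Kr m (p+1) y from huu)
  -- the common boosted parent at level p+3
  have hvassign : ∀ w : X, dist w v ≤ Lam base Kr (p+3) / 4 →
      assign N col base Kr m (p+3) w = v := fun w hw =>
    assign_eq_of_near N col base Kr m hg hvmem hm hw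
  have hdx : dist x u ≤ Lam base Kr (p+1) / 3 := dist_lam N col base Kr m hg (p+1) x
  have hdy : dist y u' ≤ Lam base Kr (p+1) / 3 := dist_lam N col base Kr m hg (p+1) y
  have hdx2 : dist x (lam N col base Kr m (p+2) x) ≤ Lam base Kr (p+2) / 3 :=
    dist_lam N col base Kr m hg (p+2) x
  have hdy2 : dist y (lam N col base Kr m (p+2) y) ≤ Lam base Kr (p+2) / 3 :=
    dist_lam N col base Kr m hg (p+2) y
  have hεt : 0 ≤ ε * dist x y := le_of_lt (mul_pos hε ht)
  have hKL2 : 72 * Lam base Kr (p+2) ≤ Kr * Lam base Kr (p+2) :=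
    mul_le_mul_of_nonneg_right hK (le_of_lt hL2)
  have htle : dist x y ≤ Lam base Kr (p+2) := by linarith
  have hliftx : lam N col base Kr m (p+3) x = v := by
    show assign N col base Kr m (p+3) (lam N col base Kr m (p+2) x) = v
    apply hvassign
    calc dist (lam N col base Kr m (p+2) x) v ≤
        dist (lam N col base Kr m (p+2) x) x + dist x v := dist_triangle _ _ _
      _ = dist x (lam N col base Kr m (p+2) x) + dist x v := by rw [dist_comm]
      _ ≤ Lam base Kr (p+2) / 3 + Lam base Kr (p+3) / 16 := add_le_add hdx2 hvx
      _ ≤ Lam base Kr (p+3) / 4 := by rw [hs3]; linarith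
  have hlifty : lam N col base Kr m (p+3) y = v := by
    show assign N col base Kr m (p+3) (lam N col base Kr m (p+2) y) = v
    apply hvassign
    calc dist (lam N col base Kr m (p+2) y) v ≤
        dist (lam N col base Kr m (p+2) y) y + (dist y x + dist x v) := by
          have h1 := dist_triangle (lam N col base Kr m (p+2) y) y v
          have h2 := dist_triangle y x v
          linarith
      _ = dist y (lam N col base Kr m (p+2) y) + (dist x y + dist x v) := by
          rw [dist_comm (lam N col base Kr m (p+2) y) y, dist_comm y x]
      _ ≤ Lam base Kr (p+2) / 3 + (Lam base Kr (p+2) + Lam base Kr (p+3) / 16) :=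
          add_le_add hdy2 (add_le_add htle hvx)
      _ ≤ Lam base Kr (p+3) / 4 := by rw [hs3]; linarith
  have hq : qual N col base Kr m a b (p+1) u u' := by
    refine ⟨lam_mem N col base Kr m hg (p+1) x, lam_mem N col base Kr m hg (p+1) y,
      ha, hb, huu, ?_, ?_⟩
    · -- distance bound
      have hdu : dist u u' ≤ Lam base Kr (p+1) / 3 + dist x y + Lam base Kr (p+1) / 3 := by
        calc dist u u' ≤ dist u x + (dist x y + dist y u') := by
              have h1 := dist_triangle u x u'
              have h2 := dist_triangle x y u'
              linarith
          _ = dist x u + (dist x y + dist y u') := by rw [dist_comm u x]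
          _ ≤ Lam base Kr (p+1) / 3 + (dist x y + Lam base Kr (p+1) / 3) :=
              add_le_add hdx (add_le_add le_rfl hdy)
          _ = Lam base Kr (p+1) / 3 + dist x y + Lam base Kr (p+1) / 3 := by ring
      -- arithmetic:  t + (2/3)·Λ₁ ≤ Λ₂·(1 - 2/Kr) = Λ₂ - 2·Λ₁
      have hKne : Kr ≠ 0 := ne_of_gt hKpos
      have hgoal : Lam base Kr (p+2) * (1 - 2/Kr) =
          Lam base Kr (p+2) - 2 * Lam base Kr (p+1) := by
        rw [hs2]; field_simp
      rw [hgoal]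
      have hA' : 12 * Lam base Kr (p+1) ≤ ε * Lam base Kr (p+2) := by
        rw [hs2]
        have := mul_le_mul_of_nonneg_right hKe (le_of_lt hL1)
        linarith
      have hε2 : ε * ε ≤ ε * (1/6) := mul_le_mul_of_nonneg_left (le_of_lt hε6) (le_of_lt hε)
      have hcoef : (1:ℝ) ≤ (1+ε/4)*(1-2*ε/9) := by nlinarith
      have hmul : (1+ε/4)*(1-2*ε/9)*(dist x y) ≤ (1-2*ε/9) * Lam base Kr (p+2) := by
        have h9 : (0:ℝ) ≤ 1-2*ε/9 := by linarith
        have := mul_le_mul_of_nonneg_left hwin1 h9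
        linarith
      have htt : dist x y ≤ (1-2*ε/9) * Lam base Kr (p+2) := by
        have := le_mul_of_one_le_left (le_of_lt ht) hcoef
        linarith
      linarith
    · show assign N col base Kr m (p+3) (assign N col base Kr m (p+2) u) =
        assign N col base Kr m (p+3) (assign N col base Kr m (p+2) u')
      exact (hliftx : _ = v).trans (hlifty.symm)
  rw [together_succ]
  have hcond : ¬ ((p+1+1) % 2 = 1) := by omega
  rw [if_neg hcond]
  exact Or.inr (Or.inl (Or.inl hq))

lemma du_degree (hg : Good N col base Kr CV) {R : ℝ} (hR : ∀ x y : X, dist x y ≤ R)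
    {d : ℝ} (hd0 : 0 ≤ d) (hdob : DoublingDimLE X d) {m1 : ℕ}
    (hm1 : 96 * Kr^2 ≤ (2:ℝ)^m1)
    (x : X) (r : ℝ) (hr : 0 < r) :
    ∃ S : Finset X, (S.card : ℝ) ≤ ((2:ℝ)^d)^m1 ∧
      ∀ y : X, du N col base Kr m a b x y ≤ r → ∃ z ∈ S, du N col base Kr m a b y z < r := by
  classical
  have hK : (72:ℝ) ≤ Kr := hg.hKr
  have hone : (1:ℝ) ≤ ((2:ℝ)^d)^m1 := by
    apply one_le_pow₀
    rw [show (1:ℝ) = (2:ℝ)^(0:ℝ) from (Real.rpow_zero 2).symm]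
    exact Real.rpow_le_rpow_of_exponent_le (by norm_num) hd0
  by_cases hsmall : r < Lam base Kr 1
  · -- the ball is just {x}
    refine ⟨{x}, by simpa using hone, ?_⟩
    intro y hy
    have hxy : y = x := by
      by_contra hne
      have hne' : x ≠ y := fun h => hne h.symm
      have hex := together_exists N col base Kr m a b hg hR x y
      rw [du_eq_lam N col base Kr m a b hne' hex] at hy
      have hfind : 1 ≤ Nat.find hex := by
        rcases Nat.eq_zero_or_pos (Nat.find hex) with h0 | h1
        · exfalso
          have := Nat.find_spec hex
          rw [h0] at this
          exact hne' this
        · exact h1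
      have := Lam_mono base Kr hg.hbase hg.hKr hfind
      linarith
    subst hxy
    exact ⟨y, Finset.mem_singleton_self y, by rw [du_self]; exact hr⟩
  push_neg at hsmall
  -- jmax := the largest j with Lam j ≤ r
  obtain ⟨n, hn⟩ := pow_unbounded_of_one_lt (r/base) (show (1:ℝ) < Kr by linarith)
  have hrn : r < Lam base Kr n := by
    have hb := hg.hbase
    have := (div_lt_iff₀ hb).mp hn
    unfold Lam
    nlinarith
  set jmax := Nat.findGreatest (fun j => Lam base Kr j ≤ r) n with hjm
  have h1n : 1 ≤ n := by
    have := hsmall.trans_lt hrn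
    exact le_of_lt (Lam_lt_rev base Kr hg.hbase hg.hKr this)
  have hjmax1 : 1 ≤ jmax :=
    Nat.le_findGreatest h1n hsmall
  have hjmaxle : Lam base Kr jmax ≤ r :=
    Nat.findGreatest_spec (P := fun j => Lam base Kr j ≤ r) h1n hsmall
  have hmaximal : ∀ k, Lam base Kr k ≤ r → k ≤ jmax := by
    intro k hk
    by_contra hlt
    push_neg at hlt
    have hkn : k ≤ n := by
      by_contra hkn
      push_neg at hkn
      have := Lam_mono base Kr hg.hbase hg.hKr (le_of_lt hkn)
      linarith
    exact Nat.findGreatest_is_greatest hlt hkn hk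
  -- membership in the ball means together at level jmax
  have hball : ∀ y : X, du N col base Kr m a b x y ≤ r → together N col base Kr m a b jmax x y := by
    intro y hy
    by_cases hne : x = y
    · subst hne; exact together_refl N col base Kr m a b jmax x
    · have hex := together_exists N col base Kr m a b hg hR x y
      rw [du_eq_lam N col base Kr m a b hne hex] at hy
      exact together_mono_le N col base Kr m a b (hmaximal _ hy) (Nat.find_spec hex)
  -- the level at which classes are counted
  set j' := if Lam base Kr jmax < r then jmax else jmax - 1 with hj'
  have hj'le : j' ≤ jmax := by
    rw [hj']; split
    · exact le_refl _
    · omega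
  have hkey : ∀ y z : X, together N col base Kr m a b j' y z →
      du N col base Kr m a b y z < r := by
    intro y z htog
    have hle := du_le_of_together N col base Kr m a b hg htog
    rw [hj'] at hle
    split at hle
    · exact lt_of_le_of_lt hle (by assumption)
    · have hlt : Lam base Kr (jmax - 1) < Lam base Kr jmax :=
        Lam_lt base Kr hg.hbase hg.hKr (by omega)
      exact lt_of_le_of_lt hle (lt_of_lt_of_le hlt hjmaxle)
  set q := j' - 1 with hq
  have hlamq : ∀ y z : X, lam N col base Kr m q y = lam N col base Kr m q z →
      together N col base Kr m a b j' y z := by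
    intro y z h
    rcases Nat.eq_zero_or_pos j' with h0 | h1
    · have h0' : q = 0 := by omega
      rw [h0'] at h
      rw [h0]
      exact (show y = z from h)
    · have : j' = q + 1 := by omega
      rw [this]
      exact lam_eq_together N col base Kr m a b h
  -- representatives
  letI : LinearOrder X := LinearOrder.lift' (Fintype.equivFin X) (Equiv.injective _)
  set ball : Finset X := Finset.univ.filter (fun y => du N col base Kr m a b x y ≤ r) with hballdef
  have hclsne : ∀ y : X, (Finset.univ.filter (fun z => together N col base Kr m a b j' y z)).Nonempty :=
    fun y => ⟨y, by simp [together_refl]⟩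
  set rep : X → X := fun y =>
    (Finset.univ.filter (fun z => together N col base Kr m a b j' y z)).min' (hclsne y) with hrep
  have hrep_together : ∀ y : X, together N col base Kr m a b j' y (rep y) := by
    intro y
    have := Finset.min'_mem _ (hclsne y)
    simp only [Finset.mem_filter] at this
    exact this.2
  have hrep_congr : ∀ y z : X, together N col base Kr m a b j' y z → rep y = rep z := by
    intro y z htog
    apply le_antisymm
    · apply Finset.min'_le
      simp only [Finset.mem_filter, Finset.mem_univ, true_and]
      exact together_trans N col base Kr m a b hg htog (hrep_together z)
    · apply Finset.min'_le
      simp only [Finset.mem_filter, Finset.mem_univ, true_and]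
      exact together_trans N col base Kr m a b hg (together_symm N col base Kr m a b htog)
        (hrep_together y)
  refine ⟨ball.image rep, ?_, ?_⟩
  swap
  · intro y hy
    refine ⟨rep y, Finset.mem_image_of_mem rep (by simp [hballdef, hy]), ?_⟩
    exact hkey y (rep y) (hrep_together y)
  -- cardinality bound
  have hinj : Set.InjOn (lam N col base Kr m q) (ball.image rep : Finset X) := by
    intro z1 hz1 z2 hz2 heq
    simp only [Finset.coe_image, Set.mem_image, Finset.mem_coe] at hz1 hz2
    obtain ⟨y1, hy1, rfl⟩ := hz1
    obtain ⟨y2, hy2, rfl⟩ := hz2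
    have htog := hlamq _ _ heq
    have h1 : rep (rep y1) = rep (rep y2) := hrep_congr _ _ htog
    have h2 : rep (rep y1) = rep y1 :=
      (hrep_congr _ _ (hrep_together y1)).symm
    have h3 : rep (rep y2) = rep y2 :=
      (hrep_congr _ _ (hrep_together y2)).symm
    rw [h2, h3] at h1
    exact h1
  have hcard : ((ball.image rep).card : ℝ) = (((ball.image rep).image (lam N col base Kr m q)).card : ℝ) := by
    rw [Finset.card_image_of_injOn hinj]
  rw [hcard]
  -- the images are separated net points inside a ball of radius 2·Lam jmax
  have hLq : (0:ℝ) < Lam base Kr q := Lam_pos base Kr hg.hbase hg.hKr q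
  have hLjmax : (0:ℝ) < Lam base Kr jmax := Lam_pos base Kr hg.hbase hg.hKr jmax
  apply sepCount hdob (s := Lam base Kr q / 16) (R := 2 * Lam base Kr jmax) (x := x) (m := m1)
  · positivity
  · intro v hv w hw hne
    simp only [Finset.mem_image] at hv hw
    obtain ⟨z1, _, rfl⟩ := hv
    obtain ⟨z2, _, rfl⟩ := hw
    exact hg.hsep q _ (lam_mem N col base Kr m hg q z1) _ (lam_mem N col base Kr m hg q z2) hne
  · intro v hv
    simp only [Finset.mem_image] at hv
    obtain ⟨z, hz, rfl⟩ := hv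
    obtain ⟨y, hy, rfl⟩ := hz
    simp only [hballdef, Finset.mem_filter] at hy
    have htxy : together N col base Kr m a b jmax x y := hball y hy.2
    have htyz : together N col base Kr m a b jmax y (rep y) :=
      together_mono_le N col base Kr m a b hj'le (hrep_together y)
    have htxz := together_trans N col base Kr m a b hg htxy htyz
    have hdxz : dist x (rep y) ≤ Lam base Kr jmax := together_dist N col base Kr m a b hg htxz
    have hdzl : dist (rep y) (lam N col base Kr m q (rep y)) ≤ Lam base Kr q / 3 :=
      dist_lam N col base Kr m hg q (rep y)
    have hmq : Lam base Kr q ≤ Lam base Kr jmax :=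
      Lam_mono base Kr hg.hbase hg.hKr (by omega)
    calc dist x (lam N col base Kr m q (rep y)) ≤
        dist x (rep y) + dist (rep y) (lam N col base Kr m q (rep y)) := dist_triangle _ _ _
      _ ≤ Lam base Kr jmax + Lam base Kr q / 3 := add_le_add hdxz hdzl
      _ ≤ 2 * Lam base Kr jmax := by linarith
  · -- radius bound: 2·Lam jmax ≤ 2^m1 · (Lam q / 48)
    have hjq : jmax ≤ q + 2 := by
      have hj'ge : jmax ≤ j' + 1 := by
        rw [hj']; split
        · omega
        · omega
      omega
    have hLle : Lam base Kr jmax ≤ Kr * (Kr * Lam base Kr q) := by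
      have h1 : Lam base Kr jmax ≤ Lam base Kr (q+2) :=
        Lam_mono base Kr hg.hbase hg.hKr hjq
      rw [Lam_succ base Kr (q+1), Lam_succ base Kr q] at h1
      exact h1
    have h2m : (96:ℝ) * Kr^2 * Lam base Kr q ≤ (2:ℝ)^m1 * Lam base Kr q :=
      mul_le_mul_of_nonneg_right hm1 (le_of_lt hLq)
    nlinarith


end Tree

/-! ### Construction of the data -/

lemma exists_good {X : Type} [MetricSpace X] [Fintype X] [Nonempty X] {d : ℝ}
    (hdob : DoublingDimLE X d) {Kr base' : ℝ} (hKr : 72 ≤ Kr) (hbase : 0 < base')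
    (hbase16 : ∀ x y : X, x ≠ y → base' / 16 < dist x y)
    {mc : ℕ} (hmc : 96 * Kr ≤ (2:ℝ)^mc) {CV : ℕ} (hCV : ((2:ℝ)^d)^mc ≤ (CV:ℝ)) :
    ∃ (N : ℕ → Finset X) (col : ℕ → X → ℕ), Good N col base' Kr CV := by
  classical
  have hKpos : (0:ℝ) < Kr := by linarith
  have hLpos : ∀ j : ℕ, (0:ℝ) < Lam base' Kr j := fun j => Lam_pos base' Kr hbase hKr j
  have hnets : ∀ j : ℕ, ∃ N' : Finset X,
      (∀ v ∈ N', ∀ w ∈ N', v ≠ w → Lam base' Kr j / 16 < dist v w) ∧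
      (∀ x : X, ∃ v ∈ N', dist x v ≤ Lam base' Kr j / 16) := by
    intro j
    cases j with
    | zero =>
      refine ⟨Finset.univ, ?_, ?_⟩
      · intro v _ w _ hvw
        have := hbase16 v w hvw
        have : base' / 16 < dist v w := this
        simpa [Lam] using this
      · intro x
        refine ⟨x, Finset.mem_univ x, ?_⟩
        simp only [dist_self]
        have := hLpos 0
        linarith
    | succ j =>
      exact exists_net (div_pos (hLpos (j+1)) (by norm_num))
  choose Nf hsep hcov using hnets
  -- a separate fix: we need N 0 = univ; redefine
  set N : ℕ → Finset X := fun j => if j = 0 then Finset.univ else Nf j with hN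
  have hsep' : ∀ j, ∀ v ∈ N j, ∀ w ∈ N j, v ≠ w → Lam base' Kr j / 16 < dist v w := by
    intro j
    rw [hN]
    cases j with
    | zero =>
      intro v _ w _ hvw
      have := hbase16 v w hvw
      simpa [Lam] using this
    | succ j => simpa using hsep (j+1)
  have hcov' : ∀ (j : ℕ) (x : X), ∃ v ∈ N j, dist x v ≤ Lam base' Kr j / 16 := by
    intro j x
    rw [hN]
    cases j with
    | zero =>
      refine ⟨x, by simp, ?_⟩
      simp only [dist_self]
      have := hLpos 0
      linarith
    | succ j => simpa using hcov (j+1) x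
  have hcols : ∀ j : ℕ, ∃ c : X → ℕ, (∀ v ∈ N j, c v < CV) ∧
      (∀ v ∈ N j, ∀ w ∈ N j, v ≠ w → dist v w ≤ 2 * Kr * Lam base' Kr j → c v ≠ c w) := by
    intro j
    apply exists_coloring (N j) (2 * Kr * Lam base' Kr j) CV
    · intro v hv
      have hreal : (((N j).filter (fun w => dist v w ≤ 2 * Kr * Lam base' Kr j)).card : ℝ)
          ≤ ((2:ℝ)^d)^mc := by
        apply sepCount hdob (s := Lam base' Kr j / 16) (R := 2 * Kr * Lam base' Kr j)
          (x := v) (m := mc)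
        · exact div_pos (hLpos j) (by norm_num)
        · intro z1 h1 z2 h2 hne
          simp only [Finset.mem_filter] at h1 h2
          exact hsep' j z1 h1.1 z2 h2.1 hne
        · intro z hz
          simp only [Finset.mem_filter] at hz
          exact hz.2
        · have h1 : (0:ℝ) < Lam base' Kr j := hLpos j
          have h2 : (2:ℝ)^mc * (Lam base' Kr j / 16 / 3) = (2:ℝ)^mc * Lam base' Kr j / 48 := by
            ring
          rw [h2]
          rw [show 2 * Kr * Lam base' Kr j = (96 * Kr) * Lam base' Kr j / 48 by ring]
          apply div_le_div_of_nonneg_right _ (by norm_num)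
          exact mul_le_mul_of_nonneg_right hmc (le_of_lt h1)
      exact_mod_cast hreal.trans hCV
    · nlinarith [hLpos j, hKpos]
  choose colf hcolB hcolP using hcols
  exact ⟨N, colf, ⟨hbase, hKr, hsep', hcov', by simp [hN], hcolB, hcolP⟩⟩

/-! ### Window selection -/

lemma window {ε rmin Kr : ℝ} {L : ℕ} (hε : 0 < ε) (hε6 : ε < 1/6) (hrmin : 0 < rmin)
    (hKr : 72 ≤ Kr) (hL : Kr^2 ≤ (1+ε/3)^L) (hLmin : ∀ n < L, (1+ε/3)^n < Kr^2)
    {t : ℝ} (ht : rmin ≤ t) :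
    ∃ i < L, ∃ p : ℕ, p % 2 = 0 ∧
      (1+ε/4) * t ≤ Lam (rmin * (1+ε/3)^i / Kr^2) Kr (p+2) ∧
      Lam (rmin * (1+ε/3)^i / Kr^2) Kr (p+2) ≤ (1+ε) * t := by
  classical
  set γ : ℝ := 1 + ε/3 with hγ
  have hγ1 : (1:ℝ) < γ := by rw [hγ]; linarith
  have hγpos : (0:ℝ) < γ := by linarith
  have hKpos : (0:ℝ) < Kr := by linarith
  have hK2 : (1:ℝ) < Kr^2 := by nlinarith
  have hLpos : 1 ≤ L := by
    by_contra h
    push_neg at h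
    interval_cases L
    · simp at hL; linarith [le_abs_self Kr]
  have htpos : (0:ℝ) < t := lt_of_lt_of_le hrmin ht
  set B : ℝ := (1+ε/4) * t with hB
  have hBpos : (0:ℝ) < B := by rw [hB]; nlinarith
  have htB : t < B := by rw [hB]; nlinarith
  -- find j
  have hexj : ∃ j : ℕ, B ≤ rmin * γ^(L-1) * (Kr^2)^j := by
    obtain ⟨j, hj⟩ := pow_unbounded_of_one_lt (B / (rmin * γ^(L-1))) hK2
    refine ⟨j, ?_⟩
    have hpos : (0:ℝ) < rmin * γ^(L-1) := by positivity
    rw [div_lt_iff₀ hpos] at hj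
    nlinarith
  set j := Nat.find hexj with hj
  have hjspec : B ≤ rmin * γ^(L-1) * (Kr^2)^j := Nat.find_spec hexj
  -- find i
  have hexi : ∃ i : ℕ, B ≤ rmin * γ^i * (Kr^2)^j := ⟨L-1, hjspec⟩
  set i := Nat.find hexi with hi
  have hispec : B ≤ rmin * γ^i * (Kr^2)^j := Nat.find_spec hexi
  have hiL : i ≤ L - 1 := Nat.find_min' hexi hjspec
  have hiL' : i < L := by omega
  -- upper bound : rmin * γ^i * (Kr^2)^j ≤ γ * B
  have hup : rmin * γ^i * (Kr^2)^j ≤ γ * B := by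
    rcases Nat.eq_zero_or_pos i with hi0 | hi1
    · rcases Nat.eq_zero_or_pos j with hj0 | hj1
      · exfalso
        rw [hi0, hj0] at hispec
        simp at hispec
        linarith
      · have hjlt : ¬ (B ≤ rmin * γ^(L-1) * (Kr^2)^(j-1)) := Nat.find_min hexj (by omega)
        push_neg at hjlt
        have hstep : rmin * γ^i * (Kr^2)^j = (rmin * γ^(L-1) * (Kr^2)^(j-1)) * (Kr^2 / γ^(L-1)) := by
          rw [hi0]
          have : (Kr^2)^j = (Kr^2)^(j-1) * Kr^2 := by
            rw [← pow_succ]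
            congr 1
            omega
          rw [this]
          field_simp
        rw [hstep]
        have hq : Kr^2 / γ^(L-1) ≤ γ := by
          rw [div_le_iff₀ (by positivity)]
          calc Kr^2 ≤ γ^L := hL
            _ = γ * γ^(L-1) := by
                rw [← pow_succ']
                congr 1
                omega
        have h1 : (0:ℝ) < rmin * γ^(L-1) * (Kr^2)^(j-1) := by positivity
        calc (rmin * γ^(L-1) * (Kr^2)^(j-1)) * (Kr^2 / γ^(L-1)) ≤
            (rmin * γ^(L-1) * (Kr^2)^(j-1)) * γ := by
              exact mul_le_mul_of_nonneg_left hq (le_of_lt h1)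
          _ ≤ B * γ := by
              apply mul_le_mul_of_nonneg_right (le_of_lt hjlt) (le_of_lt hγpos)
          _ = γ * B := by ring
    · have hilt : ¬ (B ≤ rmin * γ^(i-1) * (Kr^2)^j) := Nat.find_min hexi (by omega)
      push_neg at hilt
      have hstep : rmin * γ^i * (Kr^2)^j = (rmin * γ^(i-1) * (Kr^2)^j) * γ := by
        have : γ^i = γ^(i-1) * γ := by
          rw [← pow_succ]
          congr 1
          omega
        rw [this]
        ring
      rw [hstep]
      calc (rmin * γ^(i-1) * (Kr^2)^j) * γ ≤ B * γ :=
            mul_le_mul_of_nonneg_right (le_of_lt hilt) (le_of_lt hγpos)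
        _ = γ * B := by ring
  refine ⟨i, hiL', 2*j, by omega, ?_, ?_⟩
  · have hval : Lam (rmin * γ^i / Kr^2) Kr (2*j+2) = rmin * γ^i * (Kr^2)^j := by
      unfold Lam
      rw [show (2*j+2) = 2*(j+1) by ring, pow_mul]
      rw [show (Kr^2)^(j+1) = (Kr^2)^j * Kr^2 by rw [← pow_succ]]
      field_simp
    rw [hval]
    exact hispec
  · have hval : Lam (rmin * γ^i / Kr^2) Kr (2*j+2) = rmin * γ^i * (Kr^2)^j := by
      unfold Lam
      rw [show (2*j+2) = 2*(j+1) by ring, pow_mul]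
      rw [show (Kr^2)^(j+1) = (Kr^2)^j * Kr^2 by rw [← pow_succ]]
      field_simp
    rw [hval]
    refine le_trans hup ?_
    rw [hγ, hB]
    nlinarith

end HSTCover

open HSTCover in
set_option maxHeartbeats 1000000 in
theorem doubling_admits_hst_ultrametric_cover' :
    ∃ c : ℝ, 0 < c ∧
      ∀ (X : Type) [MetricSpace X] [Fintype X] (d : ℝ),
        1 ≤ d → DoublingDimLE X d →
        ∀ ε : ℝ, 0 < ε → ε < 1 / 6 →
          (∃ s : ℕ, (s : ℝ) ≤ (ε ^ (-((100:ℝ) * d))) ∧ ∃ D : Fin s → X → X → ℝ,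
            (∀ i, UltrametricOn (D i)) ∧
            (∀ (i : Fin s) (x y : X), dist x y ≤ D i x y) ∧
            (∀ x y : X, ∃ i, D i x y ≤ (1+ε) * dist x y) ∧
            (∀ i, IsHST (D i) (1/ε)) ∧
            ∀ i, HSTDegreeLE (D i) (ε ^ (-((100:ℝ) * d)))) := by
  classical
  refine ⟨100, by norm_num, ?_⟩
  intro X _ _ d hd hdob ε hε hε6
  have hd0 : (0:ℝ) ≤ d := by linarith
  have hiε : (0:ℝ) < ε⁻¹ := inv_pos.mpr hε
  have hee : ε * ε⁻¹ = 1 := mul_inv_cancel₀ (ne_of_gt hε)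
  have hR6 : (6:ℝ) < ε⁻¹ := by
    rw [show (6:ℝ) = (1/6)⁻¹ by norm_num]
    exact (inv_lt_inv₀ (by norm_num) hε).mpr hε6
  have hR1 : (1:ℝ) ≤ ε⁻¹ := by linarith
  -- the target quantity
  have hτ : ε ^ (-((100:ℝ) * d)) = ε⁻¹ ^ ((100:ℝ) * d) := by
    rw [Real.rpow_neg (le_of_lt hε), Real.inv_rpow (le_of_lt hε)]
  have hP1 : (1:ℝ) ≤ ε⁻¹ ^ ((100:ℝ)*d) := by
    calc (1:ℝ) = ε⁻¹ ^ (0:ℝ) := (Real.rpow_zero _).symm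
      _ ≤ ε⁻¹ ^ ((100:ℝ)*d) := Real.rpow_le_rpow_of_exponent_le hR1 (by linarith)
  -- conversion (2^d)^n = (2^n)^d
  have hconv : ∀ (n : ℕ), ((2:ℝ)^d)^n = ((2:ℝ)^n : ℝ)^d := by
    intro n
    rw [← Real.rpow_natCast ((2:ℝ)^d) n, ← Real.rpow_natCast (2:ℝ) n,
      ← Real.rpow_mul (by norm_num), ← Real.rpow_mul (by norm_num), mul_comm]
  cases isEmpty_or_nonempty X with
  | inl hX =>
    refine ⟨0, by simp [hτ]; positivity, fun i => i.elim0, fun i => i.elim0,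
      fun i => i.elim0, fun x => (hX.false x).elim, fun i => i.elim0, fun i => i.elim0⟩
  | inr hXne =>
  rcases subsingleton_or_nontrivial X with hsub | hnt
  · -- subsingleton: one trivial tree
    refine ⟨1, by rw [hτ]; exact_mod_cast hP1, fun _ _ _ => (0:ℝ), ?_, ?_, ?_, ?_, ?_⟩
    · exact fun i => ⟨fun x => rfl, fun x y hxy => absurd (Subsingleton.elim x y) hxy,
        fun _ _ => rfl, fun x y z => by norm_num⟩
    · intro i x y
      rw [Subsingleton.elim x y, dist_self]
    · intro x y
      refine ⟨⟨0, by norm_num⟩, ?_⟩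
      have : (0:ℝ) ≤ (1+ε) * dist x y := mul_nonneg (by linarith) dist_nonneg
      simpa using this
    · intro i x y z h0 h1
      simp at h0
    · intro i x r hr
      refine ⟨{x}, by rw [hτ]; simpa using hP1, fun y _ => ⟨x, Finset.mem_singleton_self x, hr⟩⟩
  · -- the main case
    obtain ⟨x0, y0, hxy0⟩ := exists_pair_ne X
    -- minimum positive distance
    have hoffne : ((Finset.univ : Finset X).offDiag).Nonempty :=
      ⟨(x0,y0), Finset.mem_offDiag.mpr ⟨Finset.mem_univ _, Finset.mem_univ _, hxy0⟩⟩
    have hrminSne : (((Finset.univ : Finset X).offDiag).image (fun p => dist p.1 p.2)).Nonempty :=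
      hoffne.image _
    set rmin := (((Finset.univ : Finset X).offDiag).image (fun p => dist p.1 p.2)).min' hrminSne
      with hrmindef
    have hrminpos : 0 < rmin := by
      obtain ⟨p, hp, hpe⟩ := Finset.mem_image.mp (Finset.min'_mem _ hrminSne)
      have hpd := Finset.mem_offDiag.mp hp
      rw [hrmindef, ← hpe]
      exact dist_pos.mpr hpd.2.2
    have hrminle : ∀ x y : X, x ≠ y → rmin ≤ dist x y := by
      intro x y hxy
      exact Finset.min'_le ((Finset.univ : Finset X).offDiag.image (fun p => dist p.1 p.2))
        (dist x y) (Finset.mem_image.mpr ⟨(x,y),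
          Finset.mem_offDiag.mpr ⟨Finset.mem_univ _, Finset.mem_univ _, hxy⟩, rfl⟩)
    -- maximum distance
    have hmaxne : (((Finset.univ ×ˢ Finset.univ : Finset (X×X))).image
        (fun p => dist p.1 p.2)).Nonempty := by
      refine ⟨dist x0 y0, Finset.mem_image.mpr ⟨(x0,y0), by simp⟩⟩
    set rmax := (((Finset.univ ×ˢ Finset.univ : Finset (X×X))).image
        (fun p => dist p.1 p.2)).max' hmaxne with hrmaxdef
    have hrmax : ∀ x y : X, dist x y ≤ rmax := by
      intro x y
      exact Finset.le_max' _ _ (Finset.mem_image.mpr ⟨(x,y), by simp⟩)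
    -- the scale ratio
    set Kr : ℝ := (⌈(12:ℝ)/ε⌉₊ : ℝ) with hKrdef
    have hKlb : 12/ε ≤ Kr := Nat.le_ceil _
    have hKr72 : (72:ℝ) ≤ Kr := by
      refine le_trans ?_ hKlb
      rw [le_div_iff₀ hε]
      linarith
    have hKpos : (0:ℝ) < Kr := by linarith
    have hKub : Kr ≤ 13 * ε⁻¹ := by
      have h1 := Nat.ceil_lt_add_one (show (0:ℝ) ≤ 12/ε by positivity)
      have h2 : (12:ℝ)/ε = 12 * ε⁻¹ := by rw [div_eq_mul_inv]
      rw [hKrdef]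
      linarith [h2 ▸ h1]
    -- number of phases
    have hexL : ∃ n : ℕ, Kr^2 ≤ (1+ε/3)^n := by
      obtain ⟨n, hn⟩ := pow_unbounded_of_one_lt (Kr^2) (show (1:ℝ) < 1+ε/3 by linarith)
      exact ⟨n, le_of_lt hn⟩
    set L := Nat.find hexL with hLdef
    have hLspec : Kr^2 ≤ (1+ε/3)^L := Nat.find_spec hexL
    have hLmin : ∀ n < L, (1+ε/3)^n < Kr^2 := fun n hn => not_le.mp (Nat.find_min hexL hn)
    have hL1 : 1 ≤ L := by
      by_contra h
      push_neg at h
      interval_cases L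
      · simp at hLspec; linarith [le_abs_self Kr]
    -- packing exponents
    have hexmc : ∃ n : ℕ, 96 * Kr ≤ (2:ℝ)^n := by
      obtain ⟨n, hn⟩ := pow_unbounded_of_one_lt (96*Kr) (show (1:ℝ) < 2 by norm_num)
      exact ⟨n, le_of_lt hn⟩
    set mc := Nat.find hexmc with hmcdef
    have hmcspec : 96 * Kr ≤ (2:ℝ)^mc := Nat.find_spec hexmc
    have hmcub : (2:ℝ)^mc ≤ 192 * Kr := by
      rcases Nat.eq_zero_or_pos mc with h0 | h1
      · rw [h0]; simp; linarith
      · have := not_le.mp (Nat.find_min hexmc (show mc - 1 < mc by omega))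
        have h2 : (2:ℝ)^mc = 2 * (2:ℝ)^(mc-1) := by
          rw [← pow_succ']
          congr 1
          omega
        rw [h2]
        linarith
    have hexm1 : ∃ n : ℕ, 96 * Kr^2 ≤ (2:ℝ)^n := by
      obtain ⟨n, hn⟩ := pow_unbounded_of_one_lt (96*Kr^2) (show (1:ℝ) < 2 by norm_num)
      exact ⟨n, le_of_lt hn⟩
    set m1 := Nat.find hexm1 with hm1def
    have hm1spec : 96 * Kr^2 ≤ (2:ℝ)^m1 := Nat.find_spec hexm1
    have hm1ub : (2:ℝ)^m1 ≤ 192 * Kr^2 := by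
      rcases Nat.eq_zero_or_pos m1 with h0 | h1
      · rw [h0]; simp; nlinarith
      · have := not_le.mp (Nat.find_min hexm1 (show m1 - 1 < m1 by omega))
        have h2 : (2:ℝ)^m1 = 2 * (2:ℝ)^(m1-1) := by
          rw [← pow_succ']
          congr 1
          omega
        rw [h2]
        linarith
    -- number of colors
    have h2d1 : (1:ℝ) ≤ (2:ℝ)^d := by
      calc (1:ℝ) = (2:ℝ)^(0:ℝ) := (Real.rpow_zero 2).symm
        _ ≤ (2:ℝ)^d := Real.rpow_le_rpow_of_exponent_le one_le_two hd0
    have h2dmc1 : (1:ℝ) ≤ ((2:ℝ)^d)^mc := one_le_pow₀ h2d1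
    set CV := ⌈((2:ℝ)^d)^mc⌉₊ with hCVdef
    have hCV : ((2:ℝ)^d)^mc ≤ (CV:ℝ) := Nat.le_ceil _
    have hCV1 : 1 ≤ CV := by
      rw [hCVdef]
      exact_mod_cast Nat.one_le_ceil_iff.mpr (by linarith)
    -- the phases are good
    have hbasepos : ∀ i : ℕ, (0:ℝ) < rmin * (1+ε/3)^i / Kr^2 := by
      intro i
      have : (0:ℝ) < (1+ε/3)^i := by positivity
      positivity
    have hbase16 : ∀ i : Fin L, ∀ x y : X, x ≠ y →
        (rmin * (1+ε/3)^(i:ℕ) / Kr^2) / 16 < dist x y := by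
      intro i x y hxy
      have h1 : (1+ε/3)^(i:ℕ) < Kr^2 := hLmin _ i.isLt
      have h2 : rmin * (1+ε/3)^(i:ℕ) / Kr^2 < rmin := by
        rw [div_lt_iff₀ (by positivity)]
        have : (0:ℝ) < (1+ε/3)^(i:ℕ) := by positivity
        nlinarith
      have h3 := hrminle x y hxy
      linarith
    have hGood : ∀ i : Fin L, ∃ (Nf : ℕ → Finset X) (colf : ℕ → X → ℕ),
        Good Nf colf (rmin * (1+ε/3)^(i:ℕ) / Kr^2) Kr CV :=
      fun i => exists_good hdob hKr72 (hbasepos i) (hbase16 i) hmcspec hCV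
    choose Nf colf hg using hGood
    -- the family of ultrametrics
    set T := (Fin L × Fin CV × Fin CV × Fin CV) with hT
    set e := Fintype.equivFin T with he
    set D : Fin (Fintype.card T) → X → X → ℝ := fun k =>
      du (Nf (e.symm k).1) (colf (e.symm k).1) (rmin * (1+ε/3)^(((e.symm k).1 : ℕ)) / Kr^2) Kr
        ((e.symm k).2.1 : ℕ) ((e.symm k).2.2.1 : ℕ) ((e.symm k).2.2.2 : ℕ) with hD
    refine ⟨Fintype.card T, ?_, D, ?_, ?_, ?_, ?_, ?_⟩
    · -- cardinality bound
      have hcardn : Fintype.card T = L * (CV * (CV * CV)) := by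
        show Fintype.card (Fin L × Fin CV × Fin CV × Fin CV) = _
        simp
      have hcard : (Fintype.card T : ℝ) = (L : ℝ) * ((CV:ℝ) * ((CV:ℝ) * (CV:ℝ))) := by
        rw [hcardn]
        push_cast
        ring
      -- bound L
      have hLub : (L:ℝ) ≤ ε⁻¹^7 := by
        have hber := one_add_mul_le_pow (show (-2:ℝ) ≤ ε/3 by linarith) (L-1)
        have hlt : (1+ε/3)^(L-1) < Kr^2 := hLmin (L-1) (by omega)
        have hK2 : Kr^2 ≤ 169 * ε⁻¹^2 := by nlinarith
        have hcast : ((L-1 : ℕ):ℝ) = (L:ℝ) - 1 := by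
          push_cast [Nat.cast_sub hL1]
          ring
        rw [hcast] at hber
        -- (L-1)*(ε/3) ≤ 169 ε⁻²   ⇒  L ≤ 1 + 507 ε⁻³
        have hstep : ((L:ℝ) - 1) * ε ≤ 507 * ε⁻¹^2 := by nlinarith
        have hstep2 : ((L:ℝ) - 1) * ε * ε⁻¹ ≤ 507 * ε⁻¹^2 * ε⁻¹ :=
          mul_le_mul_of_nonneg_right hstep (le_of_lt hiε)
        have hstep3 : (L:ℝ) - 1 ≤ 507 * ε⁻¹^3 := by
          calc (L:ℝ) - 1 = ((L:ℝ) - 1) * (ε * ε⁻¹) := by rw [hee]; ring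
            _ = ((L:ℝ) - 1) * ε * ε⁻¹ := by ring
            _ ≤ 507 * ε⁻¹^2 * ε⁻¹ := hstep2
            _ = 507 * ε⁻¹^3 := by ring
        have h6 : (6:ℝ)^4 ≤ ε⁻¹^4 := pow_le_pow_left₀ (by norm_num) (le_of_lt hR6) 4
        have h7 : ε⁻¹^3 * ε⁻¹^4 = ε⁻¹^7 := by ring
        nlinarith [pow_pos hiε 3, pow_pos hiε 4]
      -- bound CV
      have hCVub : (CV:ℝ) ≤ 2 * (ε⁻¹^6)^d := by
        have h1 : ((CV:ℝ)) < ((2:ℝ)^d)^mc + 1 := Nat.ceil_lt_add_one (by linarith)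
        have h2 : ((2:ℝ)^d)^mc = ((2:ℝ)^mc)^d := hconv mc
        have h3 : ((2:ℝ)^mc : ℝ) ≤ ε⁻¹^6 := by
          have h31 : (2:ℝ)^mc ≤ 192 * Kr := hmcub
          have h32 : (192:ℝ) * Kr ≤ 2496 * ε⁻¹ := by linarith
          have h33 : (2496:ℝ) ≤ ε⁻¹^5 := by
            have := pow_le_pow_left₀ (show (0:ℝ) ≤ 6 by norm_num) (le_of_lt hR6) 5
            norm_num at this
            rw [← inv_pow] at this
            linarith
          have h34 : (2496:ℝ) * ε⁻¹ ≤ ε⁻¹^5 * ε⁻¹ :=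
            mul_le_mul_of_nonneg_right h33 (le_of_lt hiε)
          have h35 : ε⁻¹^5 * ε⁻¹ = ε⁻¹^6 := by ring
          linarith
        have h4 : ((2:ℝ)^mc : ℝ)^d ≤ (ε⁻¹^6)^d :=
          Real.rpow_le_rpow (by positivity) h3 hd0
        have h5 : (1:ℝ) ≤ (ε⁻¹^6)^d := by
          calc (1:ℝ) = (1:ℝ)^d := (Real.one_rpow d).symm
            _ ≤ (ε⁻¹^6)^d := Real.rpow_le_rpow (by norm_num) (one_le_pow₀ hR1) hd0
        rw [h2] at h1
        linarith
      -- put together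
      rw [hcard, hτ]
      have hq6 : (ε⁻¹^6 : ℝ)^d = ε⁻¹ ^ ((6:ℝ)*d) := by
        rw [← Real.rpow_natCast ε⁻¹ 6, ← Real.rpow_mul (le_of_lt hiε)]
        norm_num
      have hCVub' : (CV:ℝ) ≤ ε⁻¹ ^ ((6:ℝ)*d + 1) := by
        calc (CV:ℝ) ≤ 2 * (ε⁻¹^6)^d := hCVub
          _ ≤ ε⁻¹ * (ε⁻¹^6)^d := by
              have := (Real.rpow_natCast ε⁻¹ 6) ▸ (le_refl ((ε⁻¹^6:ℝ)^d))
              nlinarith [Real.rpow_pos_of_pos (show (0:ℝ) < ε⁻¹^6 by positivity) d, hR6]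
          _ = ε⁻¹ ^ ((6:ℝ)*d + 1) := by
              rw [hq6, Real.rpow_add hiε]
              rw [Real.rpow_one]
              ring
      have hL7 : (L:ℝ) ≤ ε⁻¹ ^ ((7:ℝ)) := by
        rw [show ((7:ℝ)) = ((7:ℕ):ℝ) by norm_num, Real.rpow_natCast]
        exact hLub
      have hCVpos : (0:ℝ) ≤ (CV:ℝ) := Nat.cast_nonneg _
      have hP : ∀ q : ℝ, (0:ℝ) < ε⁻¹ ^ q := fun q => Real.rpow_pos_of_pos hiε q
      calc (L : ℝ) * ((CV:ℝ) * ((CV:ℝ) * (CV:ℝ)))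
          ≤ ε⁻¹^((7:ℝ)) * (ε⁻¹^((6:ℝ)*d+1) * (ε⁻¹^((6:ℝ)*d+1) * ε⁻¹^((6:ℝ)*d+1))) := by
            apply mul_le_mul hL7 _ (by positivity) (le_of_lt (hP 7))
            apply mul_le_mul hCVub' _ (by positivity) (le_of_lt (hP _))
            apply mul_le_mul hCVub' hCVub' hCVpos (le_of_lt (hP _))
        _ = ε⁻¹ ^ ((7:ℝ) + ((6:ℝ)*d+1) + ((6:ℝ)*d+1) + ((6:ℝ)*d+1)) := by
            rw [← Real.rpow_add hiε, ← Real.rpow_add hiε, ← Real.rpow_add hiε]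
            ring_nf
        _ ≤ ε⁻¹ ^ ((100:ℝ) * d) := by
            apply Real.rpow_le_rpow_of_exponent_le hR1
            linarith
    · -- ultrametric
      intro k
      exact ⟨du_self _ _ _ _ _ _ _,
        fun x y hxy => du_pos _ _ _ _ _ _ _ (hg (e.symm k).1) hrmax hxy,
        fun x y => du_symm _ _ _ _ _ _ _ x y,
        fun x y z => du_ultra _ _ _ _ _ _ _ (hg (e.symm k).1) hrmax x y z⟩
    · -- domination
      intro k x y
      exact du_dominates _ _ _ _ _ _ _ (hg (e.symm k).1) hrmax x y
    · -- the (1+ε) guarantee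
      intro x y
      by_cases hxy : x = y
      · refine ⟨e ⟨⟨0, by omega⟩, ⟨0, by omega⟩, ⟨0, by omega⟩, ⟨0, by omega⟩⟩, ?_⟩
        subst hxy
        rw [hD]
        simp only [Equiv.symm_apply_apply]
        rw [du_self, dist_self]
        simp
      · obtain ⟨i, hiL, p, hp, hw1, hw2⟩ :=
          window hε hε6 hrminpos hKr72 hLspec hLmin (hrminle x y hxy)
        have hi' : ((⟨i, hiL⟩ : Fin L) : ℕ) = i := rfl
        obtain ⟨v, hv, hvd⟩ := (hg ⟨i, hiL⟩).hcov (p+3) x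
        have hmlt : colf ⟨i, hiL⟩ (p+3) v < CV := (hg ⟨i, hiL⟩).hcolB (p+3) v hv
        have halt : colf ⟨i, hiL⟩ (p+1)
            (lam (Nf ⟨i, hiL⟩) (colf ⟨i, hiL⟩) (rmin * (1+ε/3)^i / Kr^2) Kr
              (colf ⟨i, hiL⟩ (p+3) v) (p+1) x) < CV :=
          (hg ⟨i, hiL⟩).hcolB (p+1) _
            (lam_mem _ _ _ _ _ (hg ⟨i, hiL⟩) (p+1) x)
        have hblt : colf ⟨i, hiL⟩ (p+1)
            (lam (Nf ⟨i, hiL⟩) (colf ⟨i, hiL⟩) (rmin * (1+ε/3)^i / Kr^2) Kr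
              (colf ⟨i, hiL⟩ (p+3) v) (p+1) y) < CV :=
          (hg ⟨i, hiL⟩).hcolB (p+1) _
            (lam_mem _ _ _ _ _ (hg ⟨i, hiL⟩) (p+1) y)
        refine ⟨e ⟨⟨i, hiL⟩, ⟨_, hmlt⟩, ⟨_, halt⟩, ⟨_, hblt⟩⟩, ?_⟩
        rw [hD]
        simp only [Equiv.symm_apply_apply]
        exact du_guarantee _ _ _ _ _ _ _ (hg ⟨i, hiL⟩) hrmax hε hε6 hKlb hxy hp hw1 hw2
          hv hvd rfl rfl rfl
    · -- HST
      intro k x y z h0 h1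
      have h2 := du_hst _ _ _ _ _ _ _ (hg (e.symm k).1) hrmax x y z h0 h1
      have h3 : (1:ℝ)/ε ≤ Kr := by
        refine le_trans ?_ hKlb
        gcongr
        norm_num
      calc 1/ε * D k x y ≤ Kr * D k x y :=
            mul_le_mul_of_nonneg_right h3 (le_of_lt h0)
        _ ≤ D k x z := h2
    · -- degree
      intro k x r hr
      obtain ⟨S, hScard, hS⟩ := du_degree _ _ _ _ _ _ _ (hg (e.symm k).1) hrmax hd0 hdob
        hm1spec x r hr
      refine ⟨S, ?_, hS⟩
      refine le_trans hScard ?_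
      rw [hτ, hconv m1]
      have h3 : ((2:ℝ)^m1 : ℝ) ≤ ε⁻¹^9 := by
        have h31 : (2:ℝ)^m1 ≤ 192 * Kr^2 := hm1ub
        have h32 : (192:ℝ) * Kr^2 ≤ 32448 * ε⁻¹^2 := by nlinarith [hKub, hKpos, hiε]
        have h33 : (32448:ℝ) ≤ ε⁻¹^7 := by
          have := pow_le_pow_left₀ (show (0:ℝ) ≤ 6 by norm_num) (le_of_lt hR6) 7
          norm_num at this
          rw [← inv_pow] at this
          linarith
        have h34 : (32448:ℝ) * ε⁻¹^2 ≤ ε⁻¹^7 * ε⁻¹^2 :=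
          mul_le_mul_of_nonneg_right h33 (by positivity)
        have h35 : ε⁻¹^7 * ε⁻¹^2 = ε⁻¹^9 := by ring
        linarith
      calc ((2:ℝ)^m1 : ℝ)^d ≤ (ε⁻¹^9)^d := Real.rpow_le_rpow (by positivity) h3 hd0
        _ = ε⁻¹ ^ ((9:ℝ)*d) := by
            rw [← Real.rpow_natCast ε⁻¹ 9, ← Real.rpow_mul (le_of_lt hiε)]
            norm_num
        _ ≤ ε⁻¹ ^ ((100:ℝ)*d) := Real.rpow_le_rpow_of_exponent_le hR1 (by linarith)


/-- Every finite metric space with doubling dimension `d ≥ 1` admits, for every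
`ε ∈ (0,1/6)`, an `(ε^{-cd}, 1+ε, 1/ε, ε^{-cd})`-ultrametric cover. -/
theorem doubling_admits_hst_ultrametric_cover :
    ∃ c : ℝ, 0 < c ∧
      ∀ (X : Type) [MetricSpace X] [Fintype X] (d : ℝ),
        1 ≤ d → DoublingDimLE X d →
        ∀ ε : ℝ, 0 < ε → ε < 1 / 6 →
          IsHSTUltrametricCover X (ε ^ (-(c * d))) (1 + ε) (1 / ε) (ε ^ (-(c * d))) := by
  obtain ⟨c, hc, h⟩ := doubling_admits_hst_ultrametric_cover'
  exact ⟨100, by norm_num, fun X _ _ d hd hdob ε hε hε6 => h X d hd hdob ε hε hε6⟩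
end

section
/- If a finite metric space (X,d) admits a (τ,ρ,k,δ)-ultrametric cover with k ≥ 2ρ, then every closed ball in X of radius r > 0 can be covered by at most τ·δ closed balls of radius r/2; in particular (X,d) has doubling dimension at most log₂(τ·δ). -/
open scoped BigOperators

open scoped BigOperators

/-! Fix `x` and `r > 0`. For each ultrametric `D i` of the cover, the `D i`-ball of radius `ρ r`
around `x` contains every `y` with `d(x,y) ≤ r` whose distance `D i` distorts by at most `ρ`.
Take the largest distance `m ≤ ρ r` from `x` in the HST: by the degree bound at most `δ` points
represent the subtrees below `m`, and since `D i` is a `k`-HST these subtrees have diameter at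
most `m / k ≤ ρ r / k ≤ r / 2`, also for `d`, which `D i` dominates. Every `y` is served by some
`D i`, so the at most `τ δ` representatives of all the `D i` cover the `d`-ball of radius `r`
by balls of radius `r / 2`. -/

theorem HSTDegreeLE.one_le {X : Type*} {D : X → X → ℝ} {δ : ℝ} (hδ : HSTDegreeLE D δ)
    (hD : ∀ x, D x x = 0) (x : X) : 1 ≤ δ := by
  obtain ⟨S, hS, hcover⟩ := hδ x 1 one_pos
  obtain ⟨z, hz, -⟩ := hcover x (by rw [hD]; exact zero_le_one)
  exact le_trans (by exact_mod_cast Finset.card_pos.mpr ⟨z, hz⟩) hS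

namespace UltrametricOn

variable {X : Type*} {D : X → X → ℝ}

theorem nonneg (hD : UltrametricOn D) (x y : X) : 0 ≤ D x y := by
  rcases eq_or_ne x y with rfl | hxy
  · exact (hD.1 x).ge
  · exact (hD.2.1 x y hxy).le

theorem eq_of_nonpos (hD : UltrametricOn D) {x y : X} (h : D x y ≤ 0) : x = y := by
  by_contra hxy
  exact (hD.2.1 x y hxy).not_ge h

theorem exists_dist_eq_of_le (hD : UltrametricOn D) {x y w : X} (hy : D x y ≤ D x w) :
    ∃ p, D y p = D x w := by
  obtain ⟨-, -, hsymm, hmax⟩ := hD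
  rcases hy.eq_or_lt with heq | hlt
  · exact ⟨x, by rw [hsymm, heq]⟩
  · refine ⟨w, le_antisymm ?_ ?_⟩
    · simpa [hsymm y x, hlt.le] using hmax y x w
    · exact (le_max_iff.mp (hmax x y w)).resolve_left hlt.not_ge

theorem mul_dist_le_of_lt (hD : UltrametricOn D) {k : ℝ} (hk : IsHST D k) {x y z w : X}
    (hy : D x y ≤ D x w) (hz : 0 < D y z) (hzw : D y z < D x w) : k * D y z ≤ D x w := by
  obtain ⟨p, hp⟩ := hD.exists_dist_eq_of_le hy
  rw [← hp] at hzw ⊢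
  exact hk y z p hz hzw

/-- `k * D y z ≤ R` stands for `D y z ≤ R / k`, so that no sign condition on `k` is needed. -/
theorem exists_finset_card_le_mul_dist_le [Fintype X] (hD : UltrametricOn D) {k δ : ℝ}
    (hk : IsHST D k) (hδ : HSTDegreeLE D δ) (x : X) (R : ℝ) :
    ∃ T : Finset X, (T.card : ℝ) ≤ δ ∧ ∀ y, D x y ≤ R → ∃ z ∈ T, k * D y z ≤ R := by
  classical
  by_cases hlevel : ∃ w, 0 < D x w ∧ D x w ≤ R
  · obtain ⟨w, hw, hwmax⟩ := (Finset.univ.filter fun w => 0 < D x w ∧ D x w ≤ R).exists_max_image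
      (D x) (by simpa [Finset.filter_nonempty_iff] using hlevel)
    simp only [Finset.mem_filter, Finset.mem_univ, true_and] at hw hwmax
    obtain ⟨T, hT, hTcover⟩ := hδ x (D x w) hw.1
    refine ⟨T, hT, fun y hy => ?_⟩
    have hyw : D x y ≤ D x w := by
      rcases eq_or_ne x y with rfl | hxy
      · exact (hD.1 x).trans_le hw.1.le
      · exact hwmax y ⟨hD.2.1 x y hxy, hy⟩
    obtain ⟨z, hzT, hz⟩ := hTcover y hyw
    refine ⟨z, hzT, ?_⟩
    rcases eq_or_ne y z with rfl | hyz
    · rw [hD.1, mul_zero]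
      exact (hD.nonneg x y).trans hy
    · exact (hD.mul_dist_le_of_lt hk hyw (hD.2.1 y z hyz) hz).trans hw.2
  · push Not at hlevel
    refine ⟨{x}, by simpa using hδ.one_le hD.1 x, fun y hy => ⟨x, by simp, ?_⟩⟩
    obtain rfl : x = y := hD.eq_of_nonpos <| not_lt.mp fun hpos => (hlevel y hpos).not_ge hy
    rwa [hD.1, mul_zero, ← hD.1 x]

end UltrametricOn

namespace IsHSTUltrametricCover

variable {X : Type*} [MetricSpace X] {τ ρ k δ : ℝ}

theorem one_le_degree (hcover : IsHSTUltrametricCover X τ ρ k δ) (x : X) : 1 ≤ δ := by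
  obtain ⟨s, -, D, hD, -, hdist, -, hdeg⟩ := hcover
  obtain ⟨i, -⟩ := hdist x x
  exact (hdeg i).one_le (hD i).1 x

theorem one_le_mul (hcover : IsHSTUltrametricCover X τ ρ k δ) (x : X) : 1 ≤ τ * δ := by
  have hδ := hcover.one_le_degree x
  obtain ⟨s, hs, _, -, -, hdist, -⟩ := hcover
  obtain ⟨i, -⟩ := hdist x x
  have hτ : (1 : ℝ) ≤ τ := le_trans (by exact_mod_cast i.pos) hs
  nlinarith

theorem one_le_of_ne (hcover : IsHSTUltrametricCover X τ ρ k δ) {x y : X} (hxy : x ≠ y) :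
    1 ≤ ρ := by
  obtain ⟨s, -, D, -, hdom, hdist, -⟩ := hcover
  obtain ⟨i, hi⟩ := hdist x y
  have hpos : 0 < dist x y := dist_pos.mpr hxy
  nlinarith [hdom i x y]

theorem exists_finset_card_le_dist_le_half [Fintype X] (hk : 2 * ρ ≤ k)
    (hcover : IsHSTUltrametricCover X τ ρ k δ) (x : X) {r : ℝ} (hr : 0 < r) :
    ∃ S : Finset X, (S.card : ℝ) ≤ τ * δ ∧ ∀ y, dist x y ≤ r → ∃ z ∈ S, dist y z ≤ r / 2 := by
  classical
  rcases subsingleton_or_nontrivial X with hX | hX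
  · refine ⟨{x}, by simpa using hcover.one_le_mul x, fun y _ => ⟨x, by simp, ?_⟩⟩
    rw [Subsingleton.elim y x, dist_self]
    positivity
  obtain ⟨a, b, hab⟩ := exists_pair_ne X
  have hρ : 1 ≤ ρ := hcover.one_le_of_ne hab
  have hδ : 1 ≤ δ := hcover.one_le_degree x
  obtain ⟨s, hs, D, hD, hdom, hdist, hHST, hdeg⟩ := hcover
  choose T hT hTcover using fun i => (hD i).exists_finset_card_le_mul_dist_le (hHST i) (hdeg i) x
    (ρ * r)
  refine ⟨Finset.univ.biUnion T, ?_, fun y hy => ?_⟩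
  · calc ((Finset.univ.biUnion T).card : ℝ) ≤ ∑ i, ((T i).card : ℝ) := by
          exact_mod_cast Finset.card_biUnion_le
      _ ≤ ∑ _i : Fin s, δ := Finset.sum_le_sum fun i _ => hT i
      _ = s * δ := by simp
      _ ≤ τ * δ := by gcongr
  · obtain ⟨i, hi⟩ := hdist x y
    obtain ⟨z, hz, hkz⟩ := hTcover i y (hi.trans (by gcongr))
    refine ⟨z, Finset.mem_biUnion.mpr ⟨i, Finset.mem_univ i, hz⟩, ?_⟩
    nlinarith [hdom i y z, (hD i).nonneg y z]

end IsHSTUltrametricCover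

/-- If a finite metric space admits a `(τ,ρ,k,δ)`-ultrametric cover with
`k ≥ 2ρ`, then every closed ball of radius `r > 0` can be covered by at most
`τ·δ` closed balls of radius `r/2`; in particular the doubling dimension is at
most `log₂(τ·δ)`. -/
theorem hst_cover_implies_doubling
    (X : Type) [MetricSpace X] [Fintype X] (τ ρ k δ : ℝ)
    (hk : 2 * ρ ≤ k)
    (hcover : IsHSTUltrametricCover X τ ρ k δ) :
    (∀ (x : X) (r : ℝ), 0 < r → ∃ S : Finset X, (S.card : ℝ) ≤ τ * δ ∧
        ∀ y : X, dist x y ≤ r → ∃ z ∈ S, dist y z ≤ r / 2) ∧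
      DoublingDimLE X (Real.logb 2 (τ * δ)) := by
  have hball := fun x r (hr : 0 < r) => hcover.exists_finset_card_le_dist_le_half hk x hr
  refine ⟨hball, fun x r hr => ?_⟩
  obtain ⟨S, hS, hScover⟩ := hball x (2 * r) (by positivity)
  rw [Real.rpow_logb two_pos (by norm_num) (one_pos.trans_le (hcover.one_le_mul x))]
  refine ⟨S, hS, fun y hy => ?_⟩
  simpa using hScover y hy
end

section
/- Let G = (V, E_b ∪ E_r) be a finite graph with disjoint edge sets E_b (blue edges) and E_r (red edges), in which every vertex is incident to at most δ_b ≥ 1 blue edges and to at most δ_r ≥ 1 red edges. Then there exist matchings M_1, M_2, …, M_γ ⊆ E_b with γ ≤ δ_b·(2δ_r + 2) such that (a) every blue edge belongs to at least one M_i, and (b) for every i, there is no red edge both of whose endpoints are matched by M_i (i.e., both endpoints are covered by edges of M_i). -/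
/-!
Call two blue edges in conflict if they share a vertex or some red edge joins an endpoint of one
to an endpoint of the other. Every edge conflicting with a blue edge `e` is incident to one of
the at most `2δr + 2` vertices that are endpoints of `e` or red neighbours of them, and each of
these carries at most `δb` blue edges, `e` among them; so `e` has fewer than `δb (2δr + 2)`
conflicts. Greedy colouring of the conflict graph with `δb (2δr + 2)` colours therefore succeeds,
and its colour classes are the required matchings.
-/

namespace SimpleGraph

variable {V : Type*} {G R : SimpleGraph V} {n Δ Δr : ℕ}

theorem ncard_neighborSet_eq_degree [G.LocallyFinite] (v : V) :
    (G.neighborSet v).ncard = G.degree v := by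
  rw [Set.ncard_eq_toFinset_card', ← card_neighborFinset_eq_degree]
  rfl

theorem colorable_of_forall_degree_lt [Fintype V] [G.LocallyFinite]
    (h : ∀ v, G.degree v < n) : G.Colorable n := by
  classical
  suffices ∀ s : Finset V, ∃ C : V → Fin n, ∀ u ∈ s, ∀ v ∈ s, G.Adj u v → C u ≠ C v by
    obtain ⟨C, hC⟩ := this Finset.univ
    exact ⟨Coloring.mk C fun huv => hC _ (Finset.mem_univ _) _ (Finset.mem_univ _) huv⟩
  intro s
  induction s using Finset.induction_on with
  | empty => exact ⟨fun v => ⟨0, (Nat.zero_le _).trans_lt (h v)⟩, by simp⟩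
  | @insert a s ha ih =>
    obtain ⟨C, hC⟩ := ih
    obtain ⟨c, -, hc⟩ : ∃ c ∈ Finset.univ, c ∉ (G.neighborFinset a).image C := by
      refine Finset.exists_mem_notMem_of_card_lt_card ?_
      calc ((G.neighborFinset a).image C).card ≤ G.degree a := Finset.card_image_le
        _ < n := h a
        _ = Finset.univ.card := (Finset.card_fin n).symm
    have hcol : ∀ v, G.Adj a v → C v ≠ c := fun v hav hv =>
      hc (Finset.mem_image.2 ⟨v, (G.mem_neighborFinset a v).2 hav, hv⟩)
    have hne : ∀ v ∈ s, v ≠ a := fun v hv hva => ha (hva ▸ hv)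
    refine ⟨Function.update C a c, ?_⟩
    simp only [Finset.mem_insert]
    rintro u (rfl | hu) v (rfl | hv) huv
    · exact (G.irrefl huv).elim
    · simpa [Function.update_of_ne (hne v hv)] using (hcol v huv).symm
    · simpa [Function.update_of_ne (hne u hu)] using hcol u huv.symm
    · simpa [Function.update_of_ne (hne u hu), Function.update_of_ne (hne v hv)]
        using hC u hu v hv huv

/-- When `G` and `R` are disjoint, the independent sets of this graph are exactly the matchings
of `G` that cover both endpoints of no edge of `R`. -/
def conflictGraph (G R : SimpleGraph V) : SimpleGraph G.edgeSet where
  Adj e f := e ≠ f ∧ ∃ x ∈ (e : Sym2 V), ∃ y ∈ (f : Sym2 V), x = y ∨ R.Adj x y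
  symm := ⟨fun _ _ ⟨hne, x, hx, y, hy, hxy⟩ => ⟨hne.symm, y, hy, x, hx, hxy.imp Eq.symm Adj.symm⟩⟩
  loopless := ⟨fun _ h => h.1 rfl⟩

theorem card_biUnion_incidenceFinset_le [DecidableEq V] [G.LocallyFinite] (s : Finset V)
    (hG : ∀ v, G.degree v ≤ Δ) : (s.biUnion (G.incidenceFinset ·)).card ≤ s.card * Δ :=
  Finset.card_biUnion_le_card_mul _ _ _ fun v _ =>
    (G.card_incidenceFinset_eq_degree v).trans_le (hG v)

theorem conflictGraph_degree_lt [DecidableEq V] [G.LocallyFinite] [R.LocallyFinite]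
    [(conflictGraph G R).LocallyFinite] (hG : ∀ v, G.degree v ≤ Δ) (hR : ∀ v, R.degree v ≤ Δr)
    (e : G.edgeSet) : (conflictGraph G R).degree e < Δ * (2 * Δr + 2) := by
  obtain ⟨e, he⟩ := e
  induction e using Sym2.ind with | h u v =>
  set F : V → Finset (Sym2 V) := fun x =>
    (insert x (R.neighborFinset x)).biUnion (G.incidenceFinset ·)
  have hF : ∀ x, (F x).card ≤ (Δr + 1) * Δ := fun x =>
    (card_biUnion_incidenceFinset_le _ hG).trans <| Nat.mul_le_mul_right _ <|
      (Finset.card_insert_le _ _).trans <| by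
        rw [card_neighborFinset_eq_degree]
        exact Nat.succ_le_succ (hR x)
  have hmem : s(u, v) ∈ F u ∪ F v :=
    Finset.mem_union_left _ <| Finset.mem_biUnion.2
      ⟨u, Finset.mem_insert_self _ _, (G.mem_incidenceFinset _ _).2 ⟨he, Sym2.mem_mk_left u v⟩⟩
  have hsub : ((conflictGraph G R).neighborFinset ⟨s(u, v), he⟩).map
      (Function.Embedding.subtype _) ⊆ (F u ∪ F v).erase s(u, v) := by
    simp only [Finset.subset_iff, Finset.mem_map, mem_neighborFinset,
      Function.Embedding.subtype_apply]
    rintro _ ⟨f, ⟨hne, x, hx, y, hy, hxy⟩, rfl⟩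
    refine Finset.mem_erase.2 ⟨fun h => hne (Subtype.ext h.symm), ?_⟩
    have hf : (f : Sym2 V) ∈ G.incidenceFinset y := (G.mem_incidenceFinset _ _).2 ⟨f.2, hy⟩
    have hy' : y ∈ insert x (R.neighborFinset x) := by
      rcases hxy with rfl | hxy
      · exact Finset.mem_insert_self _ _
      · exact Finset.mem_insert_of_mem ((R.mem_neighborFinset _ _).2 hxy)
    rcases Sym2.mem_iff.1 hx with rfl | rfl
    · exact Finset.mem_union_left _ (Finset.mem_biUnion.2 ⟨y, hy', hf⟩)
    · exact Finset.mem_union_right _ (Finset.mem_biUnion.2 ⟨y, hy', hf⟩)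
  have hcard := (Finset.card_le_card hsub).trans_eq (Finset.card_erase_of_mem hmem)
  have hunion := (Finset.card_union_le (F u) (F v)).trans (Nat.add_le_add (hF u) (hF v))
  have hpos := Finset.card_pos.2 ⟨_, hmem⟩
  rw [Finset.card_map, card_neighborFinset_eq_degree] at hcard
  have : Δ * (2 * Δr + 2) = (Δr + 1) * Δ + (Δr + 1) * Δ := by ring
  omega

namespace Coloring

variable {α : Type*} (C : (conflictGraph G R).Coloring α)

theorem eq_of_conflict {e f : G.edgeSet} (hC : C e = C f) {x y : V} (hx : x ∈ (e : Sym2 V))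
    (hy : y ∈ (f : Sym2 V)) (hxy : x = y ∨ R.Adj x y) : e = f :=
  by_contra fun hne => C.valid ⟨hne, x, hx, y, hy, hxy⟩ hC

def colorClassGraph (i : α) : SimpleGraph V := fromEdgeSet ((↑) '' C.colorClass i)

theorem colorClassGraph_adj {i : α} {x y : V} :
    (C.colorClassGraph i).Adj x y ↔ ∃ h : G.Adj x y, C ⟨s(x, y), h⟩ = i := by
  simpa [colorClassGraph, colorClass] using fun h _ => h.ne

theorem colorClassGraph_le (i : α) : C.colorClassGraph i ≤ G :=
  fun _ _ h => (C.colorClassGraph_adj.1 h).1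

theorem colorClassGraph_adj_of_adj {x y : V} (h : G.Adj x y) :
    (C.colorClassGraph (C ⟨s(x, y), h⟩)).Adj x y :=
  C.colorClassGraph_adj.2 ⟨h, rfl⟩

theorem colorClassGraph_eq_of_adj {i : α} {v u u' : V} (hu : (C.colorClassGraph i).Adj v u)
    (hu' : (C.colorClassGraph i).Adj v u') : u = u' := by
  obtain ⟨h, hC⟩ := C.colorClassGraph_adj.1 hu
  obtain ⟨h', hC'⟩ := C.colorClassGraph_adj.1 hu'
  have := C.eq_of_conflict (hC.trans hC'.symm) (Sym2.mem_mk_left v u) (Sym2.mem_mk_left v u')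
    (Or.inl rfl)
  exact Sym2.congr_right.1 (congrArg Subtype.val this)

theorem not_adj_of_mem_support_colorClassGraph (hGR : Disjoint G R) {i : α} {u v : V}
    (hu : u ∈ (C.colorClassGraph i).support) (hv : v ∈ (C.colorClassGraph i).support) :
    ¬R.Adj u v := by
  intro huv
  obtain ⟨a, ha, hCa⟩ := hu.imp fun _ => C.colorClassGraph_adj.1
  obtain ⟨b, hb, hCb⟩ := hv.imp fun _ => C.colorClassGraph_adj.1
  have := C.eq_of_conflict (hCa.trans hCb.symm) (Sym2.mem_mk_left u a) (Sym2.mem_mk_left v b)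
    (Or.inr huv)
  have hab : s(u, a) = s(v, b) := Subtype.ext_iff.1 this
  rcases Sym2.mem_iff.1 (hab ▸ Sym2.mem_mk_left v b : v ∈ s(u, a)) with rfl | rfl
  · exact R.irrefl huv
  · exact disjoint_left.1 hGR _ _ ha huv

end Coloring

end SimpleGraph

theorem blue_red_matching_cover_general
    (V : Type) [Fintype V] (Eb Er : SimpleGraph V) (δb δr : ℕ)
    (hdisj : ∀ u v : V, ¬(Eb.Adj u v ∧ Er.Adj u v))
    (hb : ∀ v : V, ({u | Eb.Adj v u} : Set V).ncard ≤ δb)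
    (hr : ∀ v : V, ({u | Er.Adj v u} : Set V).ncard ≤ δr) :
    ∃ (γ : ℕ) (M : Fin γ → SimpleGraph V),
      γ ≤ δb * (2 * δr + 2) ∧
      (∀ i, M i ≤ Eb) ∧
      (∀ (i : Fin γ) (v u u' : V), (M i).Adj v u → (M i).Adj v u' → u = u') ∧
      (∀ u v : V, Eb.Adj u v → ∃ i, (M i).Adj u v) ∧
      (∀ (i : Fin γ) (u v : V), Er.Adj u v →
        ¬((∃ a, (M i).Adj u a) ∧ ∃ b, (M i).Adj v b)) := by
  classical
  have hbdeg (v : V) : Eb.degree v ≤ δb := Eb.ncard_neighborSet_eq_degree v ▸ hb v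
  have hrdeg (v : V) : Er.degree v ≤ δr := Er.ncard_neighborSet_eq_degree v ▸ hr v
  have hdisj' : Disjoint Eb Er := SimpleGraph.disjoint_left.2 fun u v h h' => hdisj u v ⟨h, h'⟩
  obtain ⟨C⟩ := SimpleGraph.colorable_of_forall_degree_lt
    (SimpleGraph.conflictGraph_degree_lt hbdeg hrdeg)
  exact ⟨_, C.colorClassGraph, le_rfl, C.colorClassGraph_le,
    fun _ _ _ _ => C.colorClassGraph_eq_of_adj, fun _ _ h => ⟨_, C.colorClassGraph_adj_of_adj h⟩,
    fun _ _ _ huv ⟨hu, hv⟩ => C.not_adj_of_mem_support_colorClassGraph hdisj' hu hv huv⟩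

/-- Given a finite graph with disjoint blue edges `Eb` and red edges `Er`, where
every vertex has blue degree at most `δb ≥ 1` and red degree at most `δr ≥ 1`,
there are at most `δb·(2δr+2)` matchings `M i ⊆ Eb` such that every blue edge
belongs to some matching, and no matching covers both endpoints of a red edge. -/
theorem blue_red_matching_cover
    (V : Type) [Fintype V] (Eb Er : SimpleGraph V) (δb δr : ℕ)
    (hδb1 : 1 ≤ δb) (hδr1 : 1 ≤ δr)
    (hdisj : ∀ u v : V, ¬(Eb.Adj u v ∧ Er.Adj u v))
    (hb : ∀ v : V, ({u | Eb.Adj v u} : Set V).ncard ≤ δb)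
    (hr : ∀ v : V, ({u | Er.Adj v u} : Set V).ncard ≤ δr) :
    ∃ (γ : ℕ) (M : Fin γ → SimpleGraph V),
      γ ≤ δb * (2 * δr + 2) ∧
      (∀ i, M i ≤ Eb) ∧
      (∀ (i : Fin γ) (v u u' : V), (M i).Adj v u → (M i).Adj v u' → u = u') ∧
      (∀ u v : V, Eb.Adj u v → ∃ i, (M i).Adj u v) ∧
      (∀ (i : Fin γ) (u v : V), Er.Adj u v →
        ¬((∃ a, (M i).Adj u a) ∧ ∃ b, (M i).Adj v b)) :=
  blue_red_matching_cover_general V Eb Er δb δr hdisj hb hr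
end

section
/- Let α ≥ 1 and δ ≥ 1, and let (U,d_U) be a finite ultrametric space that is an α-HST whose tree has degree at most δ. Then (U,d_U) admits a (⌈δ/2⌉, 1/α)-LSO. -/
open scoped BigOperators

/-- The ordering `σ` serves the pair `(x,y)` with stretch `ρ` (w.r.t. the
distance function `d`): `x ≺_σ y` and the points strictly between `x` and `y`
in `σ` split (at threshold `t`) into a prefix interval contained in
`B(x, ρ·d(x,y))` and a suffix interval contained in `B(y, ρ·d(x,y))`. -/
def LSOPair {X : Type*} (d : X → X → ℝ) (σ : X → ℝ) (ρ : ℝ) (x y : X) : Prop :=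
  σ x < σ y ∧ ∃ t : ℝ, ∀ z : X, σ x < σ z → σ z < σ y →
    (σ z < t → d x z ≤ ρ * d x y) ∧ (t ≤ σ z → d y z ≤ ρ * d x y)

/-- `(τ,ρ)`-LSO for `X` with distance function `d`: at most `τ` linear
orderings of `X` (each given by an injective real-valued function), such that
every pair is served by some ordering, possibly after swapping roles. -/
def IsLSO {X : Type*} (d : X → X → ℝ) (τ ρ : ℝ) : Prop :=
  ∃ s : ℕ, (s : ℝ) ≤ τ ∧ ∃ σ : Fin s → X → ℝ,
    (∀ i, Function.Injective (σ i)) ∧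
    ∀ x y : X, x ≠ y → ∃ i, LSOPair d (σ i) ρ x y ∨ LSOPair d (σ i) ρ y x

/-!
Induct on finite subsets `A`. If `r` is the diameter of `A`, the relation `d x y < r` splits `A`
into balls, which by the degree bound number at most `δ ≤ 2s` for `s = ⌈δ/2⌉`, and each ball
carries `s` orderings by induction. Walecki's decomposition of `K_{2s}` into `s` Hamiltonian paths
gives `s` orderings of the balls in which any two balls are adjacent; concatenate the orderings of
the balls along these paths. A pair inside one ball is served as it is inside that ball. A pair
from two different balls is at distance `r` and is served by a path in which its balls are
adjacent: only points of these two balls lie between its endpoints, and by the HST property they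
are within `r / α` of the endpoint in their own ball.
-/

open Finset

variable {X : Type*} {d : X → X → ℝ}

lemma UltrametricOn.dist_self (hu : UltrametricOn d) (x : X) : d x x = 0 := hu.1 x

lemma UltrametricOn.pos_of_ne (hu : UltrametricOn d) {x y : X} (h : x ≠ y) : 0 < d x y :=
  hu.2.1 x y h

lemma UltrametricOn.comm (hu : UltrametricOn d) (x y : X) : d x y = d y x := hu.2.2.1 x y

lemma UltrametricOn.nonneg_s8 (hu : UltrametricOn d) (x y : X) : 0 ≤ d x y := by
  rcases eq_or_ne x y with rfl | h
  · exact (hu.dist_self x).ge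
  · exact (hu.pos_of_ne h).le

lemma UltrametricOn.lt_of_lt_of_lt (hu : UltrametricOn d) {x y z : X} {r : ℝ}
    (hxy : d x y < r) (hyz : d y z < r) : d x z < r :=
  (hu.2.2.2 x y z).trans_lt (max_lt hxy hyz)

lemma IsHST.le_one_div_mul {α : ℝ} (hhst : IsHST d α) (hu : UltrametricOn d) (hα : 0 < α)
    {x y z : X} (h : d x z < d x y) : d x z ≤ 1 / α * d x y := by
  rcases eq_or_ne x z with rfl | hxz
  · rw [hu.dist_self]
    exact mul_nonneg (one_div_nonneg.2 hα.le) (hu.nonneg_s8 x y)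
  · rw [one_div_mul_eq_div, le_div_iff₀' hα]
    exact hhst x z y (hu.pos_of_ne hxz) h

lemma HSTDegreeLE.mono {δ δ' : ℝ} (h : HSTDegreeLE d δ) (hδ : δ ≤ δ') : HSTDegreeLE d δ' :=
  fun x r hr => (h x r hr).imp fun _ hS => ⟨hS.1.trans hδ, hS.2⟩

section Balls

variable (d) in
noncomputable def ballIn (A : Finset X) (x : X) (r : ℝ) : Finset X := {y ∈ A | d x y < r}

variable {A : Finset X} {x y : X} {r : ℝ}

lemma mem_ballIn : y ∈ ballIn d A x r ↔ y ∈ A ∧ d x y < r := mem_filter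

lemma ballIn_congr (hu : UltrametricOn d) (h : d x y < r) : ballIn d A x r = ballIn d A y r := by
  ext z
  simp only [mem_ballIn]
  exact and_congr_right fun _ =>
    ⟨hu.lt_of_lt_of_lt ((hu.comm y x).trans_lt h), hu.lt_of_lt_of_lt h⟩

lemma ballIn_eq_ballIn_iff (hu : UltrametricOn d) (hy : y ∈ A) (hr : 0 < r) :
    ballIn d A x r = ballIn d A y r ↔ d x y < r := by
  refine ⟨fun h => ?_, ballIn_congr hu⟩
  have hyy : y ∈ ballIn d A y r := mem_ballIn.2 ⟨hy, (hu.dist_self y).trans_lt hr⟩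
  exact (mem_ballIn.1 (h ▸ hyy)).2

lemma card_image_ballIn_le [DecidableEq X] (hu : UltrametricOn d) {δ : ℝ} (hdeg : HSTDegreeLE d δ)
    (hr : 0 < r) (hA : ∀ y ∈ A, d x y ≤ r) : ((A.image (ballIn d A · r)).card : ℝ) ≤ δ := by
  obtain ⟨S, hS, hcover⟩ := hdeg x r hr
  have hsub : A.image (ballIn d A · r) ⊆ S.image (ballIn d A · r) := by
    intro c hc
    obtain ⟨y, hy, rfl⟩ := mem_image.1 hc
    obtain ⟨z, hz, hyz⟩ := hcover y (hA y hy)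
    exact mem_image.2 ⟨z, hz, (ballIn_congr hu hyz).symm⟩
  calc ((A.image (ballIn d A · r)).card : ℝ)
      ≤ (S.image (ballIn d A · r)).card := by exact_mod_cast card_le_card hsub
    _ ≤ S.card := by exact_mod_cast card_image_le
    _ ≤ δ := hS

end Balls

lemma Finset.exists_index_of_card_image_le {Y : Type*} [DecidableEq Y] {f : X → Y}
    {A : Finset X} {m : ℕ} (h : (A.image f).card ≤ m) :
    ∃ κ : X → ℕ, (∀ x ∈ A, κ x < m) ∧ ∀ x ∈ A, ∀ y ∈ A, κ x = κ y ↔ f x = f y := by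
  let e := (A.image f).equivFin
  have hf : ∀ x ∈ A, f x ∈ A.image f := fun x hx => mem_image_of_mem f hx
  refine ⟨fun x => if hx : f x ∈ A.image f then e ⟨f x, hx⟩ else 0,
    fun x hx => ?_, fun x hx y hy => ?_⟩
  · simpa only [dif_pos (hf x hx)] using (e _).isLt.trans_le h
  · simp only [dif_pos (hf x hx), dif_pos (hf y hy), Fin.val_inj, e.apply_eq_iff_eq,
      Subtype.mk.injEq]

section Walecki

/-- Position of `v` in the `j`-th Walecki path `j, j + 1, j - 1, j + 2, j - 2, …, j + s` through
`ℤ / 2s`; `w` is `v - j` reduced mod `2s`, provided `j < s` and `v < 2s`. -/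
def walecki (s j v : ℕ) : ℕ :=
  let w := if j ≤ v then v - j else v + 2 * s - j
  if w = 0 then 0 else if w ≤ s then 2 * w - 1 else 2 * (2 * s - w)

variable {s j u v : ℕ}

lemma walecki_injOn (hj : j < s) (hu : u < 2 * s) (hv : v < 2 * s)
    (h : walecki s j u = walecki s j v) : u = v := by
  simp only [walecki] at h
  split_ifs at h <;> omega

/-- Consecutive vertices of the `j`-th path have sum `2j` or `2j + 1` mod `2s`, so `u` and `v`
are adjacent in the path with `j ≡ ⌊(u + v) / 2⌋ mod s`. -/
lemma exists_walecki_adjacent (hu : u < 2 * s) (hv : v < 2 * s) (huv : u ≠ v) :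
    ∃ j < s, walecki s j u + 1 = walecki s j v ∨ walecki s j v + 1 = walecki s j u := by
  refine ⟨if (u + v) / 2 < s then (u + v) / 2 else (u + v) / 2 - s, by split_ifs <;> omega, ?_⟩
  simp only [walecki]
  split_ifs <;> omega

end Walecki

section LexKey

/-- Since `arctan a / π ∈ (-1/2, 1/2)`, `lexKey` orders `ℕ × ℝ` lexicographically. -/
noncomputable def lexKey (p : ℕ) (a : ℝ) : ℝ := p + Real.arctan a / Real.pi

variable {p q : ℕ} {a b : ℝ}

lemma lexKey_mem_Ioo (p : ℕ) (a : ℝ) : lexKey p a ∈ Set.Ioo ((p : ℝ) - 1 / 2) (p + 1 / 2) := by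
  have h₁ := Real.neg_pi_div_two_lt_arctan a
  have h₂ := Real.arctan_lt_pi_div_two a
  constructor
  · rw [lexKey, sub_eq_add_neg, add_lt_add_iff_left, lt_div_iff₀ Real.pi_pos]
    linarith
  · rw [lexKey, add_lt_add_iff_left, div_lt_iff₀ Real.pi_pos]
    linarith

lemma lexKey_lt_lexKey_iff_right : lexKey p a < lexKey p b ↔ a < b := by
  rw [lexKey, lexKey, add_lt_add_iff_left, div_lt_div_iff_of_pos_right Real.pi_pos,
    Real.arctan_lt_arctan_iff]

lemma lexKey_lt_lexKey_iff : lexKey p a < lexKey q b ↔ p < q ∨ p = q ∧ a < b := by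
  have hp := lexKey_mem_Ioo p a
  have hq := lexKey_mem_Ioo q b
  constructor
  · intro h
    have hpq : p < q + 1 := by
      have : (p : ℝ) < q + 1 := by linarith [hp.1, hq.2]
      exact_mod_cast this
    rcases Nat.lt_succ_iff.1 hpq |>.lt_or_eq with hpq | rfl
    · exact .inl hpq
    · exact .inr ⟨rfl, lexKey_lt_lexKey_iff_right.1 h⟩
  · rintro (hpq | ⟨rfl, hab⟩)
    · have : (p : ℝ) + 1 ≤ q := by exact_mod_cast hpq
      linarith [hp.2, hq.1]
    · exact lexKey_lt_lexKey_iff_right.2 hab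

lemma lexKey_inj : lexKey p a = lexKey q b ↔ p = q ∧ a = b := by
  refine ⟨fun h => ?_, fun ⟨hpq, hab⟩ => hpq ▸ hab ▸ rfl⟩
  rcases lt_trichotomy p q with hpq | rfl | hpq
  · exact absurd h (lexKey_lt_lexKey_iff.2 (.inl hpq)).ne
  · refine ⟨rfl, le_antisymm ?_ ?_⟩ <;> rw [← not_lt, ← lexKey_lt_lexKey_iff_right (p := p)]
    exacts [h.not_gt, h.not_lt]
  · exact absurd h (lexKey_lt_lexKey_iff.2 (.inl hpq)).ne'

end LexKey

section LSOOn

variable (d) in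
def LSOPairOn (A : Finset X) (σ : X → ℝ) (ρ : ℝ) (x y : X) : Prop :=
  σ x < σ y ∧ ∃ t : ℝ, ∀ z ∈ A, σ x < σ z → σ z < σ y →
    (σ z < t → d x z ≤ ρ * d x y) ∧ (t ≤ σ z → d y z ≤ ρ * d x y)

variable (d) in
def IsLSOOn (A : Finset X) {s : ℕ} (σ : Fin s → X → ℝ) (ρ : ℝ) : Prop :=
  (∀ i, Set.InjOn (σ i) A) ∧
    ∀ x ∈ A, ∀ y ∈ A, x ≠ y → ∃ i, LSOPairOn d A (σ i) ρ x y ∨ LSOPairOn d A (σ i) ρ y x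

variable {A : Finset X} {s : ℕ} {ρ : ℝ}

lemma isLSOOn_of_subsingleton (hA : (A : Set X).Subsingleton) (σ : Fin s → X → ℝ) :
    IsLSOOn d A σ ρ :=
  ⟨fun _ => hA.injOn _, fun _ hx _ hy hxy => (hxy (hA hx hy)).elim⟩

lemma IsLSOOn.isLSO [Fintype X] {σ : Fin s → X → ℝ} (h : IsLSOOn d univ σ ρ) : IsLSO d s ρ :=
  ⟨s, le_rfl, σ, fun i => by simpa using h.1 i, fun x y hxy => by
    simpa [LSOPairOn, LSOPair] using h.2 x (mem_univ x) y (mem_univ y) hxy⟩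

end LSOOn

section Glue

variable {A : Finset X} {s : ℕ} {ρ : ℝ} {κ : X → ℕ} {F : ℕ → Fin s → X → ℝ} {i : Fin s}
  {x y : X}

noncomputable def lexGlue (κ : X → ℕ) (F : ℕ → Fin s → X → ℝ) (i : Fin s) (x : X) : ℝ :=
  lexKey (walecki s i (κ x)) (F (κ x) i x)

lemma lexGlue_lt_lexGlue_iff {z : X} : lexGlue κ F i x < lexGlue κ F i z ↔
    walecki s i (κ x) < walecki s i (κ z) ∨
      walecki s i (κ x) = walecki s i (κ z) ∧ F (κ x) i x < F (κ z) i z :=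
  lexKey_lt_lexKey_iff

lemma lexGlue_injOn (hκ : ∀ x ∈ A, κ x < 2 * s)
    (hF : ∀ c, Set.InjOn (F c i) ↑({x ∈ A | κ x = c} : Finset X)) :
    Set.InjOn (lexGlue κ F i) A := by
  intro x hx y hy h
  obtain ⟨hpos, hF'⟩ := lexKey_inj.1 h
  have hxy : κ x = κ y := walecki_injOn i.2 (hκ x hx) (hκ y hy) hpos
  rw [hxy] at hF'
  exact hF (κ y) (by simpa using ⟨hx, hxy⟩) (by simpa using hy) hF'

lemma lsoPairOn_lexGlue_of_eq {c : ℕ} (hκ : ∀ x ∈ A, κ x < 2 * s) (hx : x ∈ A) (hxc : κ x = c)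
    (hyc : κ y = c) (h : LSOPairOn d {x ∈ A | κ x = c} (F c i) ρ x y) :
    LSOPairOn d A (lexGlue κ F i) ρ x y := by
  obtain ⟨hlt, t, ht⟩ := h
  have hblock : ∀ z ∈ A, lexGlue κ F i x < lexGlue κ F i z → lexGlue κ F i z < lexGlue κ F i y →
      κ z = c := by
    intro z hz h₁ h₂
    rw [lexGlue_lt_lexGlue_iff, hyc, ← hxc] at h₂
    rw [lexGlue_lt_lexGlue_iff] at h₁
    rw [← hxc]
    refine walecki_injOn i.2 (hκ z hz) (hκ x hx) ?_
    rcases h₁ with h₁ | ⟨h₁, -⟩ <;> rcases h₂ with h₂ | ⟨h₂, -⟩ <;> omega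
  refine ⟨lexGlue_lt_lexGlue_iff.2 (.inr ⟨by rw [hxc, hyc], by rwa [hxc, hyc]⟩),
    lexKey (walecki s i c) t, fun z hz h₁ h₂ => ?_⟩
  have hzc := hblock z hz h₁ h₂
  simp only [lexGlue, hxc, hyc, hzc, lexKey_lt_lexKey_iff_right] at h₁ h₂ ⊢
  simpa only [← not_lt, lexKey_lt_lexKey_iff_right] using ht z (by simpa using ⟨hz, hzc⟩) h₁ h₂

lemma lsoPairOn_lexGlue_of_adjacent (hκ : ∀ x ∈ A, κ x < 2 * s) (hx : x ∈ A) (hy : y ∈ A)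
    (hadj : walecki s i (κ x) + 1 = walecki s i (κ y))
    (hxρ : ∀ z ∈ A, κ z = κ x → d x z ≤ ρ * d x y)
    (hyρ : ∀ z ∈ A, κ z = κ y → d y z ≤ ρ * d x y) :
    LSOPairOn d A (lexGlue κ F i) ρ x y := by
  refine ⟨lexGlue_lt_lexGlue_iff.2 (.inl (by omega)), walecki s i (κ x) + 1 / 2,
    fun z hz h₁ h₂ => ⟨fun hzt => hxρ z hz ?_, fun hzt => hyρ z hz ?_⟩⟩
  all_goals
    have hkey := lexKey_mem_Ioo (walecki s i (κ z)) (F (κ z) i z)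
    unfold lexGlue at hzt
    rw [lexGlue_lt_lexGlue_iff] at h₁ h₂
    refine walecki_injOn i.2 (hκ z hz) (hκ _ ‹_›) ?_
  · have : (walecki s i (κ z) : ℝ) < walecki s i (κ x) + 1 := by linarith [hkey.1]
    have : walecki s i (κ z) < walecki s i (κ x) + 1 := by exact_mod_cast this
    rcases h₁ with h₁ | ⟨h₁, -⟩ <;> omega
  · have : (walecki s i (κ x) : ℝ) < walecki s i (κ z) := by linarith [hkey.2]
    have : walecki s i (κ x) < walecki s i (κ z) := by exact_mod_cast this
    rcases h₂ with h₂ | ⟨h₂, -⟩ <;> omega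

theorem isLSOOn_lexGlue (hsymm : ∀ x y, d x y = d y x) (hκ : ∀ x ∈ A, κ x < 2 * s)
    (hF : ∀ c, IsLSOOn d {x ∈ A | κ x = c} (F c) ρ)
    (hcross : ∀ x ∈ A, ∀ y ∈ A, κ x ≠ κ y → ∀ z ∈ A, κ z = κ x → d x z ≤ ρ * d x y) :
    IsLSOOn d A (lexGlue κ F) ρ := by
  refine ⟨fun i => lexGlue_injOn hκ fun c => (hF c).1 i, fun x hx y hy hxy => ?_⟩
  by_cases hc : κ x = κ y
  · obtain ⟨i, hi⟩ := (hF (κ x)).2 x (by simpa using hx) y (by simpa using ⟨hy, hc.symm⟩) hxy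
    exact ⟨i, hi.imp (lsoPairOn_lexGlue_of_eq hκ hx rfl hc.symm)
      (lsoPairOn_lexGlue_of_eq hκ hy hc.symm rfl)⟩
  · obtain ⟨j, hj, hadj⟩ := exists_walecki_adjacent (hκ x hx) (hκ y hy) hc
    have adjacent : ∀ {u v : X}, u ∈ A → v ∈ A → κ u ≠ κ v →
        walecki s j (κ u) + 1 = walecki s j (κ v) → LSOPairOn d A (lexGlue κ F ⟨j, hj⟩) ρ u v :=
      fun {u v} hu hv huv h => lsoPairOn_lexGlue_of_adjacent hκ hu hv h (hcross _ hu _ hv huv)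
        fun z hz hzv => by rw [hsymm u v]; exact hcross _ hv _ hu (Ne.symm huv) z hz hzv
    exact ⟨⟨j, hj⟩, hadj.imp (adjacent hx hy hc) (adjacent hy hx (Ne.symm hc))⟩

end Glue

lemma exists_isLSOOn_of_ssubset {α : ℝ} {s : ℕ} (hu : UltrametricOn d) (hhst : IsHST d α)
    (hα : 0 < α) (hdeg : HSTDegreeLE d (2 * s)) {A : Finset X} (hA : (A : Set X).Nontrivial)
    (ih : ∀ B ⊂ A, ∃ σ : Fin s → X → ℝ, IsLSOOn d B σ (1 / α)) :
    ∃ σ : Fin s → X → ℝ, IsLSOOn d A σ (1 / α) := by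
  classical
  have hne : A.Nonempty := coe_nonempty.1 hA.nonempty
  obtain ⟨⟨a, b⟩, hab, hmax⟩ := (A ×ˢ A).exists_max_image (fun p => d p.1 p.2) (hne.product hne)
  rw [mem_product] at hab
  set r := d a b
  have hdiam : ∀ x ∈ A, ∀ y ∈ A, d x y ≤ r := fun x hx y hy => hmax (x, y) (mem_product.2 ⟨hx, hy⟩)
  have hr : 0 < r := by
    obtain ⟨x, hx, y, hy, hxy⟩ := hA
    exact (hu.pos_of_ne hxy).trans_le (hdiam x hx y hy)
  have hballs : (A.image (ballIn d A · r)).card ≤ 2 * s := by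
    exact_mod_cast card_image_ballIn_le hu hdeg hr (hdiam a hab.1)
  obtain ⟨κ, hκ, hκ_iff⟩ := exists_index_of_card_image_le hballs
  have hκ_eq : ∀ x ∈ A, ∀ y ∈ A, κ x = κ y ↔ d x y < r := fun x hx y hy =>
    (hκ_iff x hx y hy).trans (ballIn_eq_ballIn_iff hu hy hr)
  have hblock : ∀ c, {x ∈ A | κ x = c} ⊂ A := by
    intro c
    refine filter_ssubset.2 (by_contra fun h => ?_)
    push Not at h
    exact (lt_irrefl r) ((hκ_eq a hab.1 b hab.2).1 ((h a hab.1).trans (h b hab.2).symm))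
  choose F hF using fun c => ih _ (hblock c)
  refine ⟨lexGlue κ F, isLSOOn_lexGlue hu.comm hκ hF fun x hx y hy hxy z hz hzx => ?_⟩
  have hxy_r : d x y = r :=
    (hdiam x hx y hy).antisymm (not_lt.1 fun h => hxy ((hκ_eq x hx y hy).2 h))
  exact hhst.le_one_div_mul hu hα (hxy_r ▸ (hκ_eq x hx z hz).1 hzx.symm)

theorem exists_isLSOOn {α : ℝ} {s : ℕ} (hu : UltrametricOn d) (hhst : IsHST d α) (hα : 0 < α)
    (hdeg : HSTDegreeLE d (2 * s)) (A : Finset X) :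
    ∃ σ : Fin s → X → ℝ, IsLSOOn d A σ (1 / α) := by
  induction A using Finset.strongInduction with
  | H A ih =>
    rcases (A : Set X).subsingleton_or_nontrivial with hA | hA
    · exact ⟨0, isLSOOn_of_subsingleton hA 0⟩
    · exact exists_isLSOOn_of_ssubset hu hhst hα hdeg hA ih

theorem hst_admits_LSO_general
    (X : Type) [Fintype X] (du : X → X → ℝ) (α δ : ℝ)
    (hα : 1 ≤ α)
    (hu : UltrametricOn du) (hhst : IsHST du α) (hdeg : HSTDegreeLE du δ) :
    IsLSO du ((⌈δ / 2⌉₊ : ℝ)) (1 / α) := by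
  have hδ : δ ≤ 2 * (⌈δ / 2⌉₊ : ℝ) := by linarith [Nat.le_ceil (δ / 2)]
  obtain ⟨σ, hσ⟩ := exists_isLSOOn hu hhst (by linarith) (hdeg.mono hδ) univ
  exact hσ.isLSO

/-- Every finite `α`-HST whose tree has degree at most `δ` admits a
`(⌈δ/2⌉, 1/α)`-LSO. -/
theorem hst_admits_LSO
    (X : Type) [Fintype X] (du : X → X → ℝ) (α δ : ℝ)
    (hα : 1 ≤ α) (hδ : 1 ≤ δ)
    (hu : UltrametricOn du) (hhst : IsHST du α) (hdeg : HSTDegreeLE du δ) :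
    IsLSO du ((⌈δ / 2⌉₊ : ℝ)) (1 / α) :=
  hst_admits_LSO_general X du α δ hα hu hhst hdeg
end

section
/- There is a universal constant c > 0 such that every finite metric space with doubling dimension d ≥ 1 admits, for every ε ∈ (0,1/6), an (ε^{−c·d}, ε)-LSO. -/
/-!
Let `δ > 0` bound all distances from below. At every level `j` fix a `δ 8ʲ / 2`-net and colour
it with `K = 2^{O(d s)}` colours so that net points within `8^{s+1} · δ 8ʲ` of each other get
different colours: by the doubling condition such a ball holds few net points, so a greedy
colouring works. For a colour `c`, attaching every level-`j` ancestor to a nearby net point of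
level `j + 1`, of colour `c` whenever possible, yields a hierarchy of clusters of diameter at
most `8 δ 8ʲ`. If `c` is the colour of the net point next to `x` at the first scale above
`d(x, y)`, then `x` and `y` merge at a level `k` with `δ 8ᵏ ≤ 8 d(x, y)`, while their ancestors
at level `k - s` still differ.

An ordering sorts the points lexicographically by the ranks of their ancestors at the levels
`≡ k (mod s)`, from the top down, where among siblings (which carry distinct colours) the colours
`a`, `b` of the level-`(k - s)` ancestors of `x` and `y` are ranked first and second. The points
between `x` and `y` then lie in the level-`(k - s)` cluster of `x` or in that of `y`, and these
have diameter at most `ε d(x, y)` once `8ˢ ≈ 64 / ε`. The orderings are indexed by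
`(k mod s, c, a, b)`, so there are `s K³ = ε^{-O(d)}` of them.
-/

open scoped BigOperators

open Finset

theorem Pi.toLex_apply_eq_of_le_of_le {ι : Type*} {β : ι → Type*} [LinearOrder ι]
    [WellFoundedLT ι] [∀ i, LinearOrder (β i)] {x y z : ∀ i, β i}
    (hxz : toLex x ≤ toLex z) (hzy : toLex z ≤ toLex y) {i : ι} (hxy : ∀ j < i, x j = y j) :
    ∀ j < i, z j = x j := by
  intro j
  induction j using WellFoundedLT.induction with
  | _ j ih =>
    intro hji
    have hxz' : ∀ l < j, x l = z l := fun l hl => (ih l hl (hl.trans hji)).symm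
    have hzy' : ∀ l < j, z l = y l := fun l hl =>
      (ih l hl (hl.trans hji)).trans (hxy l (hl.trans hji))
    exact le_antisymm ((Pi.apply_le_of_toLex hzy hzy').trans_eq (hxy j hji).symm)
      (Pi.apply_le_of_toLex hxz hxz')

theorem Finset.exists_coloring_of_card_filter_lt {α : Type*} [DecidableEq α]
    (E : α → α → Prop) [DecidableRel E] (hE : ∀ u v, E u v → E v u) {K : ℕ} (hK : 0 < K)
    (V : Finset α)
    (hV : ∀ v ∈ V, #{u ∈ V.erase v | E v u} < K) :
    ∃ χ : α → Fin K, ∀ u ∈ V, ∀ v ∈ V, u ≠ v → E u v → χ u ≠ χ v := by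
  induction V using Finset.induction_on with
  | empty => exact ⟨fun _ => ⟨0, hK⟩, by simp⟩
  | insert a V ha ih =>
    obtain ⟨χ, hχ⟩ := ih fun v hv => (card_le_card (filter_subset_filter _
      (erase_subset_erase v (subset_insert a V)))).trans_lt (hV v (mem_insert_of_mem hv))
    have hused : #({u ∈ V | E a u}.image χ) < #(univ : Finset (Fin K)) := by
      refine card_image_le.trans_lt ?_
      simpa [erase_insert ha] using hV a (mem_insert_self a V)
    obtain ⟨c, -, hc⟩ := exists_mem_notMem_of_card_lt_card hused
    have hfree : ∀ v ∈ V, E a v → χ v ≠ c := fun v hv hav hvc =>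
      hc (mem_image.2 ⟨v, mem_filter.2 ⟨hv, hav⟩, hvc⟩)
    refine ⟨Function.update χ a c, fun u hu v hv huv huv' => ?_⟩
    by_cases hua : u = a <;> by_cases hva : v = a
    · exact absurd (hua.trans hva.symm) huv
    · subst hua
      rw [Function.update_self, Function.update_of_ne hva]
      exact (hfree v ((mem_insert.1 hv).resolve_left hva) huv').symm
    · subst hva
      rw [Function.update_self, Function.update_of_ne hua]
      exact hfree u ((mem_insert.1 hu).resolve_left hua) (hE _ _ huv')
    · rw [Function.update_of_ne hua, Function.update_of_ne hva]
      exact hχ u ((mem_insert.1 hu).resolve_left hua) v ((mem_insert.1 hv).resolve_left hva)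
        huv huv'

section RankBy

variable {X L : Type*} [Fintype X] [LinearOrder L] {f : X → L}

def rankBy (f : X → L) (z : X) : ℕ := #{w | f w < f z}

theorem rankBy_lt_rankBy_iff {z w : X} : rankBy f z < rankBy f w ↔ f z < f w := by
  refine ⟨fun h => not_le.1 fun hwz => h.not_ge (card_le_card fun u hu => ?_), fun h => ?_⟩
  · simp only [mem_filter, mem_univ, true_and] at hu ⊢
    exact hu.trans_le hwz
  · refine card_lt_card ⟨fun u hu => ?_, fun hsub => ?_⟩
    · simp only [mem_filter, mem_univ, true_and] at hu ⊢
      exact hu.trans h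
    · have := hsub (by simpa using h)
      simp at this

theorem rankBy_injective (hf : Function.Injective f) : Function.Injective (rankBy f) := by
  intro z w h
  refine hf (le_antisymm ?_ ?_) <;> refine not_lt.1 fun hlt => ?_
  · exact (rankBy_lt_rankBy_iff.2 hlt).ne' h
  · exact (rankBy_lt_rankBy_iff.2 hlt).ne h

theorem lsoPair_rankBy_of_split {d : X → X → ℝ} {ρ : ℝ} {x y : X} (P : X → Prop)
    (hxy : f x < f y)
    (hP : ∀ z, f x < f z → f z < f y → P z → d x z ≤ ρ * d x y)
    (hnP : ∀ z, f x < f z → f z < f y → ¬ P z → d y z ≤ ρ * d x y)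
    (hPlt : ∀ z w, f x < f z → f z < f y → f x < f w → f w < f y → P z → ¬ P w →
      f z < f w) :
    LSOPair d (fun z => (rankBy f z : ℝ)) ρ x y := by
  classical
  have hσ : ∀ z w, (rankBy f z : ℝ) < rankBy f w ↔ f z < f w := fun z w => by
    rw [Nat.cast_lt, rankBy_lt_rankBy_iff]
  let T : Finset ℝ := insert (rankBy f y : ℝ)
    ((univ.filter fun w => f x < f w ∧ f w < f y ∧ ¬ P w).image fun w => (rankBy f w : ℝ))
  refine ⟨(hσ x y).2 hxy, T.min' (insert_nonempty _ _), fun z hxz hzy => ?_⟩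
  rw [hσ] at hxz hzy
  have hPt : P z → (rankBy f z : ℝ) < T.min' (insert_nonempty _ _) := fun hz => by
    simp only [T, lt_min'_iff, mem_insert, mem_image, mem_filter, mem_univ, true_and]
    rintro _ (rfl | ⟨w, ⟨hxw, hwy, hw⟩, rfl⟩)
    exacts [(hσ z y).2 hzy, (hσ z w).2 (hPlt z w hxz hzy hxw hwy hz hw)]
  have hnPt : ¬ P z → T.min' (insert_nonempty _ _) ≤ rankBy f z := fun hz =>
    min'_le _ _ (mem_insert_of_mem (mem_image.2 ⟨z, by simp [hxz, hzy, hz], rfl⟩))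
  by_cases hz : P z
  · exact ⟨fun _ => hP z hxz hzy hz, fun h => absurd (hPt hz) (not_lt.2 h)⟩
  · exact ⟨fun h => absurd (hnPt hz) (not_le.2 h), fun _ => hnP z hxz hzy hz⟩

end RankBy

theorem exists_separated_net {X : Type*} [MetricSpace X] [Finite X] {r : ℝ} (hr : 0 ≤ r) :
    ∃ N : Finset X, (∀ u ∈ N, ∀ v ∈ N, u ≠ v → r < dist u v) ∧
      ∀ x, ∃ u ∈ N, dist x u ≤ r := by
  classical
  obtain ⟨N, -, hN⟩ := Finite.exists_le_maximal
    (p := fun N : Finset X => ∀ u ∈ N, ∀ v ∈ N, u ≠ v → r < dist u v) (a := ∅)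
    (by simp)
  refine ⟨N, hN.prop, fun x => ?_⟩
  by_contra! hx
  have hxN : insert x N ≤ N := hN.2 (fun u hu v hv huv => by
    rcases mem_insert.1 hu with rfl | hu' <;> rcases mem_insert.1 hv with rfl | hv'
    exacts [absurd rfl huv, hx v hv', by rw [dist_comm]; exact hx u hu',
      hN.prop u hu' v hv' huv])
    (subset_insert x N)
  exact (hx x (hxN (mem_insert_self x N))).not_ge (by simpa using hr)

theorem exists_pos_forall_le_dist (X : Type*) [MetricSpace X] [Fintype X] :
    ∃ δ > 0, ∀ x y : X, x ≠ y → δ ≤ dist x y := by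
  classical
  let S : Finset ℝ :=
    insert 1 ((univ.filter fun p : X × X => p.1 ≠ p.2).image fun p => dist p.1 p.2)
  refine ⟨S.min' (insert_nonempty _ _), (S.lt_min'_iff _).2 fun r hr => ?_, fun x y hxy =>
    S.min'_le _ (mem_insert_of_mem (mem_image.2 ⟨(x, y), by simpa using hxy, rfl⟩))⟩
  simp only [S, mem_insert, mem_image, mem_filter, mem_univ, true_and] at hr
  obtain rfl | ⟨p, hp, rfl⟩ := hr
  exacts [one_pos, dist_pos.2 hp]

theorem exists_forall_dist_le_mul_pow {X : Type*} [MetricSpace X] [Finite X] {δ : ℝ}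
    (hδ : 0 < δ) : ∃ J : ℕ, ∀ u v : X, dist u v ≤ δ * 8 ^ J / 2 := by
  obtain ⟨B, hB⟩ := Finite.exists_le fun p : X × X => dist p.1 p.2
  obtain ⟨J, hJ⟩ := pow_unbounded_of_one_lt (2 * B / δ) (by norm_num : (1 : ℝ) < 8)
  rw [div_lt_iff₀ hδ] at hJ
  exact ⟨J, fun u v => (hB (u, v)).trans (by linarith)⟩

namespace DoublingDimLE

variable {X : Type*} [MetricSpace X] {d : ℝ}

theorem exists_cover_pow (h : DoublingDimLE X d) (m : ℕ) (x : X) {r : ℝ} (hr : 0 < r) :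
    ∃ S : Finset X, (#S : ℝ) ≤ (2 ^ d) ^ m ∧
      ∀ y, dist x y ≤ 2 ^ m * r → ∃ z ∈ S, dist y z ≤ r := by
  classical
  induction m generalizing x with
  | zero =>
    refine ⟨{x}, by simp, fun y hy => ⟨x, mem_singleton_self x, ?_⟩⟩
    simpa [dist_comm] using hy
  | succ m ih =>
    obtain ⟨S, hS, hcov⟩ := h x (2 ^ m * r) (by positivity)
    choose F hF hFcov using ih
    refine ⟨S.biUnion F, ?_, fun y hy => ?_⟩
    · calc (#(S.biUnion F) : ℝ) ≤ ∑ z ∈ S, (#(F z) : ℝ) := mod_cast card_biUnion_le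
        _ ≤ ∑ _z ∈ S, (2 ^ d) ^ m := sum_le_sum fun z _ => hF z
        _ = #S * (2 ^ d) ^ m := by rw [sum_const, nsmul_eq_mul]
        _ ≤ 2 ^ d * (2 ^ d) ^ m := by gcongr
        _ = (2 ^ d) ^ (m + 1) := by ring
    · obtain ⟨z, hz, hyz⟩ := hcov y (by rw [pow_succ] at hy; linarith)
      obtain ⟨w, hw, hyw⟩ := hFcov z y (by rwa [dist_comm])
      exact ⟨w, mem_biUnion.2 ⟨z, hz, hw⟩, hyw⟩

theorem card_filter_dist_le (h : DoublingDimLE X d) (m : ℕ) {T : Finset X} {r : ℝ}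
    (hr : 0 < r) (hT : ∀ u ∈ T, ∀ v ∈ T, u ≠ v → 2 * r < dist u v) (x : X) :
    (#{u ∈ T | dist x u ≤ 2 ^ m * r} : ℝ) ≤ (2 ^ d) ^ m := by
  obtain ⟨S, hS, hcov⟩ := h.exists_cover_pow m x hr
  choose! f hfS hf using hcov
  refine le_trans ?_ hS
  refine Nat.cast_le.2 (card_le_card_of_injOn f (fun u hu => hfS u (mem_filter.1 hu).2) ?_)
  intro u hu v hv huv
  by_contra hne
  refine (hT u (mem_filter.1 hu).1 v (mem_filter.1 hv).1 hne).not_ge ?_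
  calc dist u v ≤ dist u (f u) + dist (f v) v := by rw [huv]; exact dist_triangle _ _ _
    _ ≤ 2 * r := by
      rw [dist_comm (f v)]
      linarith [hf u (mem_filter.1 hu).2, hf v (mem_filter.1 hv).2]

theorem exists_coloring (h : DoublingDimLE X d) (hd : 0 ≤ d) (m : ℕ) {T : Finset X} {r : ℝ}
    (hr : 0 < r) (hT : ∀ u ∈ T, ∀ v ∈ T, u ≠ v → 2 * r < dist u v) :
    ∃ χ : X → Fin ⌊((2 : ℝ) ^ d) ^ m⌋₊,
      ∀ u ∈ T, ∀ v ∈ T, u ≠ v → dist u v ≤ 2 ^ m * r → χ u ≠ χ v := by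
  classical
  have hK : (1 : ℝ) ≤ (2 ^ d) ^ m := one_le_pow₀ (Real.one_le_rpow one_le_two hd)
  refine exists_coloring_of_card_filter_lt (fun u v => dist u v ≤ 2 ^ m * r)
    (fun u v huv => by rwa [dist_comm]) (Nat.floor_pos.2 hK) T fun v hv => ?_
  rw [← Nat.add_one_le_iff, Nat.le_floor_iff (by positivity), filter_erase,
    card_erase_add_one (mem_filter.2 ⟨hv, by rw [dist_self]; positivity⟩)]
  exact h.card_filter_dist_le m hr hT v

end DoublingDimLE

section Rank

variable {X κ : Type*} [Fintype X] [DecidableEq κ]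

noncomputable def rank (col : X → κ) (a b : κ) (u : X) : ℕ :=
  if col u = a then 0 else if col u = b then 1 else Fintype.equivFin X u + 2

theorem eq_of_rank_eq {col : X → κ} {a b : κ} {u v : X} (h : rank col a b u = rank col a b v)
    (hcol : col u = col v → u = v) : u = v := by
  by_cases hc : col u = col v
  · exact hcol hc
  unfold rank at h
  split_ifs at h <;> first
    | omega
    | exact absurd (‹col u = _›.trans ‹col v = _›.symm) hc
    | exact (Fintype.equivFin X).injective (Fin.ext (by omega))

end Rank

structure ColoredNets (X : Type*) [MetricSpace X] (κ : Type*) (δ : ℝ) (s : ℕ) where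
  pos : 0 < δ
  le_dist : ∀ x y : X, x ≠ y → δ ≤ dist x y
  net : ℕ → Finset X
  lt_dist : ∀ j, ∀ u ∈ net j, ∀ v ∈ net j, u ≠ v → δ * 8 ^ j / 2 < dist u v
  exists_near : ∀ j x, ∃ u ∈ net j, dist x u ≤ δ * 8 ^ j / 2
  color : ℕ → X → κ
  color_ne : ∀ j, ∀ u ∈ net j, ∀ v ∈ net j, u ≠ v →
    dist u v ≤ 8 ^ (s + 1) * (δ * 8 ^ j) → color j u ≠ color j v

namespace ColoredNets

variable {X : Type*} [MetricSpace X] {κ : Type*} {δ : ℝ} {s : ℕ} (H : ColoredNets X κ δ s)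

theorem nonempty_of_doublingDimLE [Finite X] {d : ℝ} (hX : DoublingDimLE X d) (hd : 0 ≤ d)
    (hδ : 0 < δ) (hδX : ∀ x y : X, x ≠ y → δ ≤ dist x y) (s : ℕ) :
    Nonempty (ColoredNets X (Fin ⌊((2 : ℝ) ^ d) ^ (3 * s + 5)⌋₊) δ s) := by
  choose N hNsep hNnear using fun j : ℕ => exists_separated_net (X := X) (r := δ * 8 ^ j / 2)
    (by positivity)
  choose χ hχ using fun j : ℕ => hX.exists_coloring hd (3 * s + 5) (r := δ * 8 ^ j / 4)
    (by positivity) fun u hu v hv huv => by linarith [hNsep j u hu v hv huv]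
  refine ⟨⟨hδ, hδX, N, hNsep, hNnear, χ, fun j u hu v hv huv huv' =>
    hχ j u hu v hv huv ?_⟩⟩
  calc dist u v ≤ 8 ^ (s + 1) * (δ * 8 ^ j) := huv'
    _ = 2 ^ (3 * s + 5) * (δ * 8 ^ j / 4) := by
      have h2 : (2 : ℝ) ^ (3 * s + 5) = 4 * 8 ^ (s + 1) := by
        rw [show 3 * s + 5 = 2 + 3 * (s + 1) by ring, pow_add, pow_mul]; norm_num
      rw [h2]; ring

open Classical in
noncomputable def capture (c : κ) (j : ℕ) (v : X) : X :=
  if h : ∃ u ∈ H.net j, dist v u ≤ 3 * (δ * 8 ^ j) ∧ H.color j u = c then h.choose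
  else (H.exists_near j v).choose

noncomputable def ancestor (c : κ) : ℕ → X → X
  | 0 => id
  | j + 1 => H.capture c (j + 1) ∘ ancestor c j

variable {c : κ} {j j' : ℕ} {x y z w : X}

theorem scale_pos (H : ColoredNets X κ δ s) (j : ℕ) : 0 < δ * 8 ^ j :=
  mul_pos H.pos (pow_pos (by norm_num) j)

@[simp] theorem ancestor_zero : H.ancestor c 0 x = x := rfl

theorem ancestor_succ : H.ancestor c (j + 1) x = H.capture c (j + 1) (H.ancestor c j x) := rfl

theorem capture_mem_net : H.capture c j x ∈ H.net j := by
  unfold capture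
  split_ifs with h
  exacts [h.choose_spec.1, (H.exists_near j x).choose_spec.1]

theorem dist_capture_le : dist x (H.capture c j x) ≤ 3 * (δ * 8 ^ j) := by
  unfold capture
  split_ifs with h
  · exact h.choose_spec.2.1
  · linarith [(H.exists_near j x).choose_spec.2, H.scale_pos j]

theorem capture_eq_of_color_eq {u : X} (hu : u ∈ H.net j) (hc : H.color j u = c)
    (hxu : dist x u ≤ 3 * (δ * 8 ^ j)) : H.capture c j x = u := by
  have h : ∃ u ∈ H.net j, dist x u ≤ 3 * (δ * 8 ^ j) ∧ H.color j u = c :=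
    ⟨u, hu, hxu, hc⟩
  rw [capture, dif_pos h]
  obtain ⟨hu', hxu', hc'⟩ := h.choose_spec
  by_contra hne
  refine H.color_ne j _ hu' u hu hne ?_ (hc'.trans hc.symm)
  have h8 : (8 : ℝ) ≤ 8 ^ (s + 1) := le_self_pow₀ (by norm_num) (by omega)
  have := H.scale_pos j
  calc dist h.choose u ≤ dist h.choose x + dist x u := dist_triangle _ _ _
    _ ≤ 8 * (δ * 8 ^ j) := by rw [dist_comm]; linarith
    _ ≤ 8 ^ (s + 1) * (δ * 8 ^ j) := by gcongr

theorem mem_net_zero (x : X) : x ∈ H.net 0 := by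
  obtain ⟨u, hu, hxu⟩ := H.exists_near 0 x
  obtain rfl : x = u := by
    by_contra hne
    linarith [H.le_dist x u hne, H.pos]
  exact hu

theorem ancestor_mem_net : H.ancestor c j x ∈ H.net j := by
  cases j
  exacts [H.mem_net_zero x, H.capture_mem_net]

theorem dist_ancestor_le_of_le (hjj' : j ≤ j') :
    dist (H.ancestor c j x) (H.ancestor c j' x) ≤ 4 * (δ * 8 ^ j') := by
  induction j', hjj' using Nat.le_induction with
  | base => rw [dist_self]; linarith [H.scale_pos j]
  | succ j' _ ih =>
    have := H.scale_pos j'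
    calc dist (H.ancestor c j x) (H.ancestor c (j' + 1) x)
        ≤ dist (H.ancestor c j x) (H.ancestor c j' x)
          + dist (H.ancestor c j' x) (H.ancestor c (j' + 1) x) := dist_triangle _ _ _
      _ ≤ 4 * (δ * 8 ^ j') + 3 * (δ * 8 ^ (j' + 1)) := add_le_add ih H.dist_capture_le
      _ ≤ 4 * (δ * 8 ^ (j' + 1)) := by rw [pow_succ]; linarith

theorem dist_ancestor_le : dist x (H.ancestor c j x) ≤ 4 * (δ * 8 ^ j) := by
  simpa using H.dist_ancestor_le_of_le (c := c) (x := x) (Nat.zero_le j)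

theorem dist_le_of_ancestor_eq (h : H.ancestor c j z = H.ancestor c j w) :
    dist w z ≤ 8 * (δ * 8 ^ j) := by
  calc dist w z ≤ dist w (H.ancestor c j w) + dist (H.ancestor c j z) z := by
        rw [h]; exact dist_triangle _ _ _
    _ ≤ 8 * (δ * 8 ^ j) := by
        rw [dist_comm _ z]
        linarith [H.dist_ancestor_le (c := c) (j := j) (x := w),
          H.dist_ancestor_le (c := c) (j := j) (x := z)]

theorem ancestor_eq_of_le (h : H.ancestor c j x = H.ancestor c j y) (hjj' : j ≤ j') :
    H.ancestor c j' x = H.ancestor c j' y := by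
  induction j', hjj' using Nat.le_induction with
  | base => exact h
  | succ j' _ ih => rw [ancestor_succ, ancestor_succ, ih]

theorem ancestor_eq_of_forall_dist_le (h : ∀ u v : X, dist u v ≤ δ * 8 ^ j / 2) :
    H.ancestor c j x = H.ancestor c j y := by
  by_contra hne
  exact (H.lt_dist j _ H.ancestor_mem_net _ H.ancestor_mem_net hne).not_ge (h _ _)

theorem color_ancestor_ne (hjj' : j ≤ j') (hj' : j' ≤ j + s)
    (hpar : H.ancestor c j' z = H.ancestor c j' w) (hne : H.ancestor c j z ≠ H.ancestor c j w) :
    H.color j (H.ancestor c j z) ≠ H.color j (H.ancestor c j w) := by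
  refine H.color_ne j _ H.ancestor_mem_net _ H.ancestor_mem_net hne ?_
  have h8 : (8 : ℝ) ^ j' ≤ 8 ^ j * 8 ^ s := by
    rw [← pow_add]; exact pow_le_pow_right₀ (by norm_num) hj'
  calc dist (H.ancestor c j z) (H.ancestor c j w)
      ≤ dist (H.ancestor c j z) (H.ancestor c j' z)
        + dist (H.ancestor c j' w) (H.ancestor c j w) := by
        rw [hpar]; exact dist_triangle _ _ _
    _ ≤ 8 * (δ * 8 ^ j') := by
        rw [dist_comm (H.ancestor c j' w)]
        linarith [H.dist_ancestor_le_of_le (c := c) (x := z) hjj',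
          H.dist_ancestor_le_of_le (c := c) (x := w) hjj']
    _ ≤ 8 * (δ * (8 ^ j * 8 ^ s)) := by have := H.pos; gcongr
    _ = 8 ^ (s + 1) * (δ * 8 ^ j) := by ring

theorem exists_merge (hxy : x ≠ y) : ∃ c k, H.ancestor c k x = H.ancestor c k y ∧
    (∀ j < k, H.ancestor c j x ≠ H.ancestor c j y) ∧ δ * 8 ^ k ≤ 8 * dist x y := by
  classical
  obtain ⟨n, hn, hn'⟩ := exists_nat_pow_near ((one_le_div H.pos).2 (H.le_dist x y hxy))
    (by norm_num : (1 : ℝ) < 8)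
  rw [le_div_iff₀ H.pos] at hn
  rw [div_lt_iff₀ H.pos] at hn'
  obtain ⟨u, hu, hxu⟩ := H.exists_near (n + 1) x
  have hcapt : ∀ w, dist x w ≤ dist x y → H.ancestor (H.color (n + 1) u) (n + 1) w = u :=
    fun w hw => H.capture_eq_of_color_eq hu rfl (by
      calc dist (H.ancestor _ n w) u ≤ dist (H.ancestor _ n w) w + dist w x + dist x u :=
            dist_triangle4 _ _ _ _
        _ ≤ 3 * (δ * 8 ^ (n + 1)) := by
            have := H.dist_ancestor_le (c := H.color (n + 1) u) (j := n) (x := w)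
            rw [pow_succ] at hxu hn' ⊢
            linarith [dist_comm w (H.ancestor (H.color (n + 1) u) n w), dist_comm x w])
  set c := H.color (n + 1) u
  have hmerge : H.ancestor c (n + 1) x = H.ancestor c (n + 1) y :=
    (hcapt x (by simp)).trans (hcapt y le_rfl).symm
  have hex : ∃ k, H.ancestor c k x = H.ancestor c k y := ⟨n + 1, hmerge⟩
  refine ⟨_, Nat.find hex, Nat.find_spec hex, fun j hj => Nat.find_min hex hj, ?_⟩
  calc δ * 8 ^ Nat.find hex ≤ δ * 8 ^ (n + 1) := by
        have := H.pos
        gcongr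
        · norm_num
        · exact Nat.find_le hmerge
    _ ≤ 8 * dist x y := by rw [pow_succ]; linarith

theorem dist_le_of_ancestor_sub_eq {ε : ℝ} (hε : 0 ≤ ε) (hεs : 64 ≤ ε * 8 ^ s) {k : ℕ}
    (hk : δ * 8 ^ k ≤ 8 * dist x y) (h : H.ancestor c (k - s) z = H.ancestor c (k - s) w) :
    dist w z ≤ ε * dist x y := by
  rcases le_or_gt s k with hsk | hks
  · refine (H.dist_le_of_ancestor_eq h).trans (le_of_mul_le_mul_right ?_
      (pow_pos (by norm_num : (0 : ℝ) < 8) s))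
    calc 8 * (δ * 8 ^ (k - s)) * 8 ^ s = 8 * (δ * 8 ^ k) := by
          rw [mul_assoc, mul_assoc, ← pow_add, Nat.sub_add_cancel hsk]
      _ ≤ 64 * dist x y := by linarith
      _ ≤ ε * 8 ^ s * dist x y := by gcongr
      _ = ε * dist x y * 8 ^ s := by ring
  · rw [Nat.sub_eq_zero_of_le hks.le, ancestor_zero, ancestor_zero] at h
    rw [h, dist_self]
    exact mul_nonneg hε dist_nonneg

section Ordering

variable [Fintype X] [DecidableEq κ]

/-- By truncated subtraction, every digit with `t ≤ m * s` is read at level `0`. -/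
noncomputable def digit (c a b : κ) (t m : ℕ) (z : X) : ℕ :=
  rank (H.color (t - m * s)) a b (H.ancestor c (t - m * s) z)

noncomputable def key (c a b : κ) (t : ℕ) (z : X) : Lex (ℕ → ℕ) :=
  toLex fun m => H.digit c a b t m z

variable {c a b : κ} {t : ℕ} {x y z w : X}

theorem ancestor_eq_of_rank_eq {j j' : ℕ} (hjj' : j ≤ j') (hj' : j' ≤ j + s)
    (hpar : H.ancestor c j' z = H.ancestor c j' w)
    (h : rank (H.color j) a b (H.ancestor c j z) = rank (H.color j) a b (H.ancestor c j w)) :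
    H.ancestor c j z = H.ancestor c j w :=
  eq_of_rank_eq h fun hcol => by_contra fun hne => H.color_ancestor_ne hjj' hj' hpar hne hcol

theorem ancestor_eq_of_digit_eq (htop : ∀ u v : X, dist u v ≤ δ * 8 ^ t / 2) {m : ℕ}
    (h : ∀ m' ≤ m, H.digit c a b t m' z = H.digit c a b t m' w) :
    H.ancestor c (t - m * s) z = H.ancestor c (t - m * s) w := by
  induction m with
  | zero => simpa using H.ancestor_eq_of_forall_dist_le htop
  | succ m ih =>
    refine H.ancestor_eq_of_rank_eq ?_ ?_ (ih fun m' hm' => h m' (by omega)) (h (m + 1) le_rfl)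
    all_goals rw [add_one_mul]; omega

theorem key_injective (hs : 0 < s) (htop : ∀ u v : X, dist u v ≤ δ * 8 ^ t / 2) :
    Function.Injective (H.key c a b t) := fun z w h => by
  have := H.ancestor_eq_of_digit_eq (m := t) htop fun m _ => congrFun h m
  rwa [Nat.sub_eq_zero_of_le (Nat.le_mul_of_pos_right t hs), ancestor_zero, ancestor_zero] at this

theorem digit_eq_of_ancestor_eq {k m m' : ℕ} (hm : t - m * s = k)
    (h : H.ancestor c k z = H.ancestor c k w) (hm' : m' ≤ m) :
    H.digit c a b t m' z = H.digit c a b t m' w := by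
  have : m' * s ≤ m * s := Nat.mul_le_mul_right s hm'
  simp only [digit, H.ancestor_eq_of_le h (j' := t - m' * s) (by omega)]

theorem ancestor_eq_of_key_between (htop : ∀ u v : X, dist u v ≤ δ * 8 ^ t / 2) {k m : ℕ}
    (hm : t - m * s = k) (hk : H.ancestor c k x = H.ancestor c k y)
    (hxz : H.key c a b t x < H.key c a b t z) (hzy : H.key c a b t z < H.key c a b t y) :
    H.ancestor c k z = H.ancestor c k x ∧
      H.digit c a b t (m + 1) x ≤ H.digit c a b t (m + 1) z ∧
      H.digit c a b t (m + 1) z ≤ H.digit c a b t (m + 1) y := by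
  have hxy : ∀ m' < m + 1, H.digit c a b t m' x = H.digit c a b t m' y := fun m' hm' =>
    H.digit_eq_of_ancestor_eq hm hk (by omega)
  have hz := Pi.toLex_apply_eq_of_le_of_le hxz.le hzy.le hxy
  refine ⟨?_, Pi.apply_le_of_toLex hxz.le fun m' hm' => (hz m' hm').symm,
    Pi.apply_le_of_toLex hzy.le fun m' hm' => (hz m' hm').trans (hxy m' hm')⟩
  rw [← hm]
  exact H.ancestor_eq_of_digit_eq htop fun m' hm' => hz m' (by omega)

theorem lsoPair_rankBy_key (htop : ∀ u v : X, dist u v ≤ δ * 8 ^ t / 2) {k m : ℕ}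
    (hm : t - m * s = k) (hk : H.ancestor c k x = H.ancestor c k y)
    (hsep : H.ancestor c (k - s) x ≠ H.ancestor c (k - s) y) {ρ : ℝ}
    (hx : ∀ z, H.ancestor c (k - s) z = H.ancestor c (k - s) x → dist x z ≤ ρ * dist x y)
    (hy : ∀ z, H.ancestor c (k - s) z = H.ancestor c (k - s) y → dist y z ≤ ρ * dist x y) :
    LSOPair (fun x y : X => dist x y) (fun z => (rankBy (H.key c
      (H.color (k - s) (H.ancestor c (k - s) x)) (H.color (k - s) (H.ancestor c (k - s) y)) t)
      z : ℝ)) ρ x y := by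
  set a := H.color (k - s) (H.ancestor c (k - s) x)
  set b := H.color (k - s) (H.ancestor c (k - s) y)
  have hj : t - (m + 1) * s = k - s := by rw [add_one_mul, ← Nat.sub_sub, hm]
  have hab : a ≠ b := H.color_ancestor_ne (Nat.sub_le k s) (by omega) hk hsep
  have hdx : H.digit c a b t (m + 1) x = 0 := by simp [digit, hj, rank, a]
  have hdy : H.digit c a b t (m + 1) y = 1 := by simp [digit, hj, rank, b, hab.symm]
  have hsib : ∀ z w, H.ancestor c k z = H.ancestor c k w →
      H.digit c a b t (m + 1) z = H.digit c a b t (m + 1) w →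
        H.ancestor c (k - s) z = H.ancestor c (k - s) w :=
    fun z w hzw hd => H.ancestor_eq_of_rank_eq (Nat.sub_le k s) (by omega) hzw (by
      simpa only [digit, hj] using hd)
  have hbetween := fun z (hxz : H.key c a b t x < H.key c a b t z) hzy =>
    H.ancestor_eq_of_key_between htop hm hk hxz hzy
  refine lsoPair_rankBy_of_split (fun z => H.digit c a b t (m + 1) z = 0)
    ⟨m + 1, fun m' hm' => H.digit_eq_of_ancestor_eq hm hk (by omega), show
      H.digit c a b t (m + 1) x < H.digit c a b t (m + 1) y by omega⟩
    (fun z hxz hzy hz => hx z (hsib z x (hbetween z hxz hzy).1 (hz.trans hdx.symm)))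
    (fun z hxz hzy hz => hy z (hsib z y ((hbetween z hxz hzy).1.trans hk) ?_))
    (fun z w hxz hzy hxw hwy hz hw => ⟨m + 1, fun m' hm' => H.digit_eq_of_ancestor_eq hm
      ((hbetween z hxz hzy).1.trans (hbetween w hxw hwy).1.symm) (by omega), ?_⟩)
  · have := (hbetween z hxz hzy).2.2
    omega
  · have := (hbetween w hxw hwy).2.2
    show H.digit c a b t (m + 1) z < H.digit c a b t (m + 1) w
    omega

end Ordering

end ColoredNets

theorem ColoredNets.isLSO {X : Type*} [MetricSpace X] [Fintype X] {κ : Type*} [Fintype κ]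
    [DecidableEq κ] {δ : ℝ} {s : ℕ} (H : ColoredNets X κ δ s) (hs : 0 < s) {ε : ℝ}
    (hε : 0 ≤ ε) (hεs : 64 ≤ ε * 8 ^ s) :
    IsLSO (fun x y : X => dist x y) (s * Fintype.card κ ^ 3) ε := by
  obtain ⟨J, hJ⟩ := exists_forall_dist_le_mul_pow (X := X) H.pos
  have htop : ∀ r, ∀ u v : X, dist u v ≤ δ * 8 ^ (J * s + r) / 2 := fun r u v =>
    (hJ u v).trans (by
      have := H.pos
      gcongr
      · norm_num
      · exact Nat.le_add_right_of_le (Nat.le_mul_of_pos_right J hs))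
  let e := Fintype.equivFin (Fin s × κ × κ × κ)
  let σ : Fin s × κ × κ × κ → X → ℝ := fun p z =>
    rankBy (H.key p.2.1 p.2.2.1 p.2.2.2 (J * s + p.1)) z
  refine ⟨Fintype.card (Fin s × κ × κ × κ), le_of_eq ?_, fun i => σ (e.symm i),
    fun i => Nat.cast_injective.comp (rankBy_injective (H.key_injective hs (htop _))),
    fun x y hxy => ?_⟩
  · simp only [Fintype.card_prod, Fintype.card_fin]
    push_cast
    ring
  obtain ⟨c, k, hk, hk', hkD⟩ := H.exists_merge hxy
  have hkJ : k ≤ J := not_lt.1 fun hJk => hk' J hJk (H.ancestor_eq_of_forall_dist_le hJ)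
  have hk0 : 0 < k := Nat.pos_of_ne_zero fun h0 => hxy (by simpa [h0] using hk)
  refine ⟨e (⟨k % s, Nat.mod_lt k hs⟩, c, H.color (k - s) (H.ancestor c (k - s) x),
    H.color (k - s) (H.ancestor c (k - s) y)), Or.inl ?_⟩
  simp only [σ, Equiv.symm_apply_apply]
  refine H.lsoPair_rankBy_key (htop _) (m := J - k / s) ?_ hk (hk' _ (by omega))
    (fun z => H.dist_le_of_ancestor_sub_eq hε hεs hkD)
    (fun z => H.dist_le_of_ancestor_sub_eq hε hεs hkD)
  have h1 := Nat.mod_add_div' k s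
  have h2 : k / s * s ≤ J * s := Nat.mul_le_mul_right s ((Nat.div_le_self k s).trans hkJ)
  rw [Nat.sub_mul]
  omega

theorem exists_pos_mul_pow_eight_mem_Icc {ε : ℝ} (hε : 0 < ε) (hε1 : ε ≤ 1) :
    ∃ s : ℕ, 0 < s ∧ ε * 8 ^ s ∈ Set.Icc 64 512 := by
  obtain ⟨n, hn, hn'⟩ := exists_nat_pow_near (x := 64 / ε)
    (by rw [le_div_iff₀ hε]; linarith) (by norm_num : (1 : ℝ) < 8)
  rw [le_div_iff₀ hε] at hn
  rw [div_lt_iff₀ hε] at hn'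
  exact ⟨n + 1, n.succ_pos, by linarith, by rw [pow_succ]; linarith⟩

theorem natCast_mul_floor_pow_le_rpow {d ε : ℝ} {s : ℕ} (hd : 1 ≤ d) (hε : 0 < ε)
    (hε6 : ε < 1 / 6) (hs : ε * 8 ^ s ≤ 512) :
    (s * ⌊((2 : ℝ) ^ d) ^ (3 * s + 5)⌋₊ ^ 3 : ℝ) ≤ ε ^ (-(28 * d)) := by
  set t := ε⁻¹
  have ht : 6 < t := by rw [lt_inv_comm₀ (by norm_num) hε]; linarith
  have h8 : (8 : ℝ) ^ s ≤ 512 * t := by rw [← div_eq_mul_inv, le_div_iff₀ hε]; linarith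
  have ht7 : 2 ^ 14 * t ≤ t ^ 7 := by
    have : (2 : ℝ) ^ 14 ≤ t ^ 6 := (by norm_num : (2 : ℝ) ^ 14 ≤ 6 ^ 6).trans
      (pow_le_pow_left₀ (by norm_num) ht.le 6)
    nlinarith
  have hM1 : 1 ≤ t ^ 7 := one_le_pow₀ (by linarith)
  set M := (t ^ 7) ^ d
  have hsM : (s : ℝ) ≤ M := calc
    (s : ℝ) ≤ 8 ^ s := by exact_mod_cast (Nat.lt_pow_self (by norm_num)).le
    _ ≤ t ^ 7 := by linarith
    _ ≤ M := Real.self_le_rpow_of_one_le hM1 hd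
  have hKM : (⌊((2 : ℝ) ^ d) ^ (3 * s + 5)⌋₊ : ℝ) ≤ M := calc
    _ ≤ ((2 : ℝ) ^ d) ^ (3 * s + 5) := Nat.floor_le (by positivity)
    _ = ((2 : ℝ) ^ (3 * s + 5)) ^ d := by
      rw [← Real.rpow_mul_natCast zero_le_two, mul_comm, Real.rpow_natCast_mul zero_le_two]
    _ ≤ M := by
      refine Real.rpow_le_rpow (by positivity) ?_ (by linarith)
      rw [pow_add, pow_mul]
      norm_num
      linarith
  calc (s * ⌊((2 : ℝ) ^ d) ^ (3 * s + 5)⌋₊ ^ 3 : ℝ) ≤ M * M ^ 3 := by gcongr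
    _ = ((t ^ 7) ^ d) ^ 4 := by ring
    _ = t ^ ((7 : ℕ) * (d * (4 : ℕ))) := by
      rw [Real.rpow_natCast_mul (by positivity), Real.rpow_mul_natCast (by positivity)]
    _ = ε ^ (-(28 * d)) := by
      rw [Real.inv_rpow hε.le, Real.rpow_neg hε.le]
      congr 2
      push_cast
      ring

/-- Every finite metric space with doubling dimension `d ≥ 1` admits, for every
`ε ∈ (0,1/6)`, an `(ε^{-cd}, ε)`-LSO. -/
theorem doubling_admits_LSO :
    ∃ c : ℝ, 0 < c ∧
      ∀ (X : Type) [MetricSpace X] [Fintype X] (d : ℝ),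
        1 ≤ d → DoublingDimLE X d →
        ∀ ε : ℝ, 0 < ε → ε < 1 / 6 →
          IsLSO (fun x y : X => dist x y) (ε ^ (-(c * d))) ε := by
  refine ⟨28, by norm_num, fun X _ _ d hd hX ε hε hε6 => ?_⟩
  obtain ⟨s, hs, hεs, hεs'⟩ := exists_pos_mul_pow_eight_mem_Icc hε (by linarith)
  obtain ⟨δ, hδ, hδX⟩ := exists_pos_forall_le_dist X
  obtain ⟨H⟩ := ColoredNets.nonempty_of_doublingDimLE hX (by linarith) hδ hδX s
  obtain ⟨n, hn, σ, hσ⟩ := H.isLSO hs hε.le hεs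
  refine ⟨n, hn.trans ?_, σ, hσ⟩
  simpa using natCast_mul_floor_pow_le_rpow hd hε hε6 hεs'
end
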